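/- arXiv:2405.18055 — 4 statements merged into one kernel-verified Lean document; each statement's English description precedes it below -/
import Mathlib

section
/- For a standard Gaussian random variable ζ, E[|ζ³ − 3ζ|] = (1 + 4e^{−3/2})·√(2/π), and in particular E[|ζ³ − 3ζ|] < 2√(2/π). -/
open MeasureTheory ProbabilityTheory Real
open Set Filter

private noncomputable def Fhm (x : ℝ) : ℝ := (x^2 - 1) * Real.exp (-(x^2/2))

private lemma hFhm (x : ℝ) : HasDerivAt Fhm ((3*x - x^3) * Real.exp (-(x^2/2))) x := by
  have h1 : HasDerivAt (fun y : ℝ => y^2 - 1) (2*x) x := by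
    simpa using (hasDerivAt_pow 2 x).sub_const 1
  have h2 : HasDerivAt (fun y : ℝ => -(y^2/2)) (-x) x := by
    have := ((hasDerivAt_pow 2 x).div_const 2).fun_neg
    simpa using this
  have h3 : HasDerivAt (fun y : ℝ => Real.exp (-(y^2/2)))
      (Real.exp (-(x^2/2)) * (-x)) x := h2.exp
  have : HasDerivAt Fhm (2 * x * Real.exp (-(x^2/2)) + (x^2 - 1) * (Real.exp (-(x^2/2)) * (-x))) x :=
    h1.fun_mul h3
  convert this using 1
  ring

private lemma exp_int_hm : Integrable (fun x : ℝ => (x^3 - 3*x) * Real.exp (-(x^2/2))) := by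
  have h3 : Integrable (fun x : ℝ => x^3 * Real.exp (-(x^2/2))) := by
    have h := integrable_rpow_mul_exp_neg_mul_sq (b := 1/2) (by norm_num)
      (s := ((3:ℕ):ℝ)) (by norm_num)
    simp only [Real.rpow_natCast] at h
    refine h.congr (Filter.Eventually.of_forall fun x => by ring_nf)
  have h1 : Integrable (fun x : ℝ => x * Real.exp (-(x^2/2))) := by
    have := integrable_mul_exp_neg_mul_sq (b := 1/2) (by norm_num)
    refine this.congr (Filter.Eventually.of_forall fun x => ?_)
    ring_nf
  refine (h3.sub (h1.const_mul 3)).congr (Filter.Eventually.of_forall fun x => ?_)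
  simp only [Pi.sub_apply]
  ring

private lemma tendsto_Fhm : Tendsto (fun x : ℝ => -Fhm x) atTop (nhds 0) := by
  have l1 : Tendsto (fun u : ℝ => (2*u - 1) * Real.exp (-u)) atTop (nhds 0) := by
    have h := ((tendsto_pow_mul_exp_neg_atTop_nhds_zero 1).const_mul 2).sub
      (Real.tendsto_exp_neg_atTop_nhds_zero)
    have h' := h.congr (fun u => by ring :
      ∀ u : ℝ, 2 * (u^1 * Real.exp (-u)) - Real.exp (-u) = (2*u - 1) * Real.exp (-u))
    simpa using h'
  have l2 : Tendsto (fun x : ℝ => x^2/2) atTop atTop := by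
    apply Tendsto.atTop_div_const (by norm_num)
    exact tendsto_pow_atTop (by norm_num)
  have := l1.comp l2
  have h3 : ((fun u : ℝ => (2*u - 1) * Real.exp (-u)) ∘ fun x : ℝ => x^2/2) = Fhm := by
    funext x; simp [Function.comp, Fhm]; ring
  rw [h3] at this
  simpa using this.neg

private lemma int_Ioi_hm : ∫ x in Ioi (Real.sqrt 3), (x^3 - 3*x) * Real.exp (-(x^2/2))
    = 2 * Real.exp (-(3/2)) := by
  have hd : ∀ x ∈ Ici (Real.sqrt 3), HasDerivAt (fun y => -Fhm y)
      ((x^3 - 3*x) * Real.exp (-(x^2/2))) x := by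
    intro x _
    have : HasDerivAt (fun y => -Fhm y) (-((3*x - x^3) * Real.exp (-(x^2/2)))) x :=
      (hFhm x).fun_neg
    convert this using 1; ring
  have := integral_Ioi_of_hasDerivAt_of_tendsto' hd exp_int_hm.integrableOn tendsto_Fhm
  rw [this]
  simp only [Fhm, Real.sq_sqrt (by norm_num : (0:ℝ) ≤ 3)]
  ring_nf

private lemma int_Ioc_hm : ∫ x in Ioc 0 (Real.sqrt 3), (3*x - x^3) * Real.exp (-(x^2/2))
    = 2 * Real.exp (-(3/2)) + 1 := by
  rw [← intervalIntegral.integral_of_le (Real.sqrt_nonneg 3)]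
  rw [intervalIntegral.integral_eq_sub_of_hasDerivAt (fun x _ => hFhm x)
    (Continuous.intervalIntegrable (by continuity) _ _)]
  simp only [Fhm]
  rw [Real.sq_sqrt (by norm_num : (0:ℝ) ≤ 3)]
  norm_num

private lemma exp_lt_hm : Real.exp (-(3/2)) < 1/4 := by
  have h1 : (2.7182818283 : ℝ) < Real.exp 1 := Real.exp_one_gt_d9
  have h2 : Real.exp (3/2) ^ 2 = Real.exp 3 := by
    rw [← Real.exp_nat_mul]; norm_num
  have h3 : Real.exp 3 = Real.exp 1 ^ 3 := by
    rw [← Real.exp_nat_mul]; norm_num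
  have e3 : (16:ℝ) < Real.exp 3 := by
    have hp := pow_lt_pow_left₀ h1 (by norm_num) (n := 3) (by norm_num)
    rw [h3]; nlinarith [hp]
  have h4 : (4:ℝ) < Real.exp (3/2) := by
    by_contra h
    push_neg at h
    have hsq : Real.exp (3/2) ^ 2 ≤ 16 := by nlinarith [Real.exp_pos (3/2)]
    rw [h2] at hsq; linarith
  rw [Real.exp_neg]
  rw [show (1:ℝ)/4 = 4⁻¹ by norm_num]
  exact inv_strictAnti₀ (by norm_num) h4

private lemma sqrt_eq_hm : Real.sqrt (2 / π) = 2 / Real.sqrt (2 * π) := by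
  have hπ : (0:ℝ) < π := Real.pi_pos
  have key : Real.sqrt (2/π) * Real.sqrt (2*π) = 2 := by
    rw [← Real.sqrt_mul (by positivity)]
    rw [show (2/π) * (2*π) = 4 by field_simp; ring]
    rw [show (4:ℝ) = 2^2 by norm_num, Real.sqrt_sq (by norm_num)]
  have h2π : (0:ℝ) < Real.sqrt (2*π) := Real.sqrt_pos.mpr (by positivity)
  field_simp at key ⊢
  linarith [key]

theorem abs_third_hermite_moment :
    (∫ x, |x ^ 3 - 3 * x| ∂(gaussianReal 0 1)
      = (1 + 4 * Real.exp (-(3 / 2))) * Real.sqrt (2 / π)) ∧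
    (∫ x, |x ^ 3 - 3 * x| ∂(gaussianReal 0 1) < 2 * Real.sqrt (2 / π)) := by
  have key : ∫ x, |x ^ 3 - 3 * x| ∂(gaussianReal 0 1)
      = (1 + 4 * Real.exp (-(3 / 2))) * Real.sqrt (2 / π) := by
    have step1 : (∫ x, |x ^ 3 - 3 * x| ∂(gaussianReal 0 1))
        = (Real.sqrt (2*π))⁻¹ * ∫ x, |x ^ 3 - 3 * x| * Real.exp (-(x^2/2)) := by
      rw [gaussianReal_of_var_ne_zero 0 one_ne_zero]
      have hpdf : (gaussianPDF 0 1)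
          = fun x => ((gaussianPDFReal 0 1 x).toNNReal : ENNReal) := rfl
      rw [hpdf, integral_withDensity_eq_integral_smul
        ((measurable_gaussianPDFReal 0 1).real_toNNReal)]
      rw [← integral_const_mul]
      refine integral_congr_ae (Filter.Eventually.of_forall fun x => ?_)
      simp only []
      rw [NNReal.smul_def, Real.coe_toNNReal _ (gaussianPDFReal_nonneg 0 1 x)]
      simp only [gaussianPDFReal, NNReal.coe_one, mul_one, sub_zero]
      rw [smul_eq_mul]
      ring_nf
    have step2 : (∫ x, |x ^ 3 - 3 * x| * Real.exp (-(x^2/2)))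
        = 2 * ∫ x in Ioi (0:ℝ), |x ^ 3 - 3 * x| * Real.exp (-(x^2/2)) := by
      rw [← integral_comp_abs (f := fun t => |t ^ 3 - 3 * t| * Real.exp (-(t^2/2)))]
      refine integral_congr_ae (Filter.Eventually.of_forall fun x => ?_)
      simp only []
      rw [sq_abs]
      congr 1
      rw [show |x|^3 - 3*|x| = |x| * (x^2 - 3) by rw [← sq_abs]; ring,
        show x^3 - 3*x = x * (x^2-3) by ring, abs_mul, abs_mul, abs_abs]
    have hf1 : IntegrableOn (fun x : ℝ => |x ^ 3 - 3 * x| * Real.exp (-(x^2/2)))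
        (Ioc 0 (Real.sqrt 3)) :=
      (Continuous.integrableOn_Ioc (by continuity))
    have hf2 : IntegrableOn (fun x : ℝ => |x ^ 3 - 3 * x| * Real.exp (-(x^2/2)))
        (Ioi (Real.sqrt 3)) := by
      refine exp_int_hm.integrableOn.congr_fun (fun x hx => ?_) measurableSet_Ioi
      have hx0 : (0:ℝ) < x := lt_of_le_of_lt (Real.sqrt_nonneg 3) hx
      have hx2 : (3:ℝ) < x^2 := (Real.sqrt_lt' hx0).mp hx
      rw [abs_of_nonneg (by nlinarith : (0:ℝ) ≤ x^3 - 3*x)]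
    have step3 : (∫ x in Ioi (0:ℝ), |x ^ 3 - 3 * x| * Real.exp (-(x^2/2)))
        = (2 * Real.exp (-(3/2)) + 1) + 2 * Real.exp (-(3/2)) := by
      rw [← Set.Ioc_union_Ioi_eq_Ioi (Real.sqrt_nonneg 3)]
      rw [setIntegral_union (Set.Ioc_disjoint_Ioi le_rfl) measurableSet_Ioi hf1 hf2]
      have e1 : (∫ x in Ioc (0:ℝ) (Real.sqrt 3), |x ^ 3 - 3 * x| * Real.exp (-(x^2/2)))
          = ∫ x in Ioc (0:ℝ) (Real.sqrt 3), (3*x - x^3) * Real.exp (-(x^2/2)) := by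
        refine setIntegral_congr_fun measurableSet_Ioc (fun x hx => ?_)
        have hx0 : (0:ℝ) < x := hx.1
        have hx2 : x^2 ≤ 3 := by
          have := Real.sqrt_le_sqrt (le_of_lt (lt_of_lt_of_le hx0 hx.2))
          nlinarith [hx.2, Real.sq_sqrt (by norm_num : (0:ℝ) ≤ 3), hx0]
        rw [abs_of_nonpos (by nlinarith : x^3 - 3*x ≤ 0)]
        ring
      have e2 : (∫ x in Ioi (Real.sqrt 3), |x ^ 3 - 3 * x| * Real.exp (-(x^2/2)))
          = ∫ x in Ioi (Real.sqrt 3), (x^3 - 3*x) * Real.exp (-(x^2/2)) := by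
        refine setIntegral_congr_fun measurableSet_Ioi (fun x hx => ?_)
        have hx0 : (0:ℝ) < x := lt_of_le_of_lt (Real.sqrt_nonneg 3) hx
        have hx2 : (3:ℝ) < x^2 := (Real.sqrt_lt' hx0).mp hx
        rw [abs_of_nonneg (by nlinarith : (0:ℝ) ≤ x^3 - 3*x)]
      rw [e1, e2, int_Ioc_hm, int_Ioi_hm]
    rw [step1, step2, step3, sqrt_eq_hm]
    have h2π : (0:ℝ) < Real.sqrt (2*π) := Real.sqrt_pos.mpr (by positivity)
    field_simp
    ring
  refine ⟨key, ?_⟩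
  rw [key]
  have hs : (0:ℝ) < Real.sqrt (2/π) := Real.sqrt_pos.mpr (by positivity)
  have := exp_lt_hm
  nlinarith [hs, this]
end

section
/- For any bounded, twice continuously differentiable function f : ℝ → ℝ with bounded first and second derivatives, and any t ∈ [0,1]: ∫₀^t (1/s) E[f(√s·ζ)(ζ²−1)] ds = 2(E[f(√t·ζ)] − f(0)), where ζ ~ N(0,1). -/
open MeasureTheory ProbabilityTheory Real Filter Set Asymptotics Metric
open scoped ENNReal NNReal Topology


noncomputable def gphi (x : ℝ) : ℝ := (Real.sqrt (2 * π))⁻¹ * Real.exp (-x ^ 2 / 2)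

lemma gphi_eq : gaussianPDFReal 0 1 = gphi := by
  ext x
  simp [gaussianPDFReal, gphi]

lemma gphi_nonneg (x : ℝ) : 0 ≤ gphi x := by
  have := gaussianPDFReal_nonneg 0 1 x
  rwa [gphi_eq] at this

lemma continuous_gphi : Continuous gphi := by
  unfold gphi
  fun_prop

lemma gaussian_eq_withDensity :
    gaussianReal 0 1 = volume.withDensity (fun x => ((gphi x).toNNReal : ℝ≥0∞)) := by
  rw [gaussianReal_of_var_ne_zero 0 one_ne_zero]
  congr 1
  ext x
  rw [gaussianPDF_def, gphi_eq]
  rfl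

lemma integral_gaussian_eq (g : ℝ → ℝ) :
    ∫ x, g x ∂(gaussianReal 0 1) = ∫ x, g x * gphi x := by
  rw [gaussian_eq_withDensity,
    integral_withDensity_eq_integral_smul (continuous_gphi.measurable.real_toNNReal) g]
  congr 1
  ext x
  rw [NNReal.smul_def, smul_eq_mul, Real.coe_toNNReal _ (gphi_nonneg x), mul_comm]

lemma integrable_gaussian_iff (g : ℝ → ℝ) :
    Integrable g (gaussianReal 0 1) ↔ Integrable (fun x => g x * gphi x) volume := by
  rw [gaussian_eq_withDensity,
    integrable_withDensity_iff_integrable_smul (continuous_gphi.measurable.real_toNNReal)]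
  constructor <;> intro h <;> refine h.congr (Filter.Eventually.of_forall fun x => ?_) <;>
    simp only [NNReal.smul_def, smul_eq_mul, Real.coe_toNNReal _ (gphi_nonneg x), mul_comm]

lemma integrable_exp_gphi : Integrable (fun x : ℝ => Real.exp (-x ^ 2 / 2)) volume := by
  have h := integrable_exp_neg_mul_sq (b := (1:ℝ)/2) (by norm_num)
  refine h.congr (Filter.Eventually.of_forall fun x => ?_)
  ring_nf

lemma integrable_sq_exp : Integrable (fun x : ℝ => x ^ 2 * Real.exp (-x ^ 2 / 2)) volume := by
  have h := integrable_rpow_mul_exp_neg_mul_sq (b := (1:ℝ)/2) (by norm_num) (s := 2) (by norm_num)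
  refine h.congr (Filter.Eventually.of_forall fun x => ?_)
  simp only [show ((2:ℝ) = ((2:ℕ):ℝ)) by norm_num, Real.rpow_natCast]
  ring_nf

lemma integrable_gphi_poly : Integrable (fun x : ℝ => (1 + x ^ 2) * gphi x) volume := by
  have : (fun x : ℝ => (1 + x ^ 2) * gphi x) =
      fun x => (Real.sqrt (2 * π))⁻¹ * (Real.exp (-x ^ 2 / 2) + x ^ 2 * Real.exp (-x ^ 2 / 2)) := by
    ext x; unfold gphi; ring
  rw [this]
  exact (integrable_exp_gphi.add integrable_sq_exp).const_mul _

lemma integrable_gaussian_of_poly_bound (g : ℝ → ℝ) (hg : AEStronglyMeasurable g (gaussianReal 0 1))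
    (C : ℝ) (h : ∀ x, |g x| ≤ C * (1 + x ^ 2)) :
    Integrable g (gaussianReal 0 1) := by
  rw [integrable_gaussian_iff]
  refine Integrable.mono' ((integrable_gphi_poly.const_mul C).congr
    (Filter.Eventually.of_forall fun x => (mul_assoc C _ _).symm))
    ((hg.mono_ac (gaussianReal_absolutelyContinuous' 0 one_ne_zero)).mul
      continuous_gphi.aestronglyMeasurable)
    (Filter.Eventually.of_forall fun x => ?_)
  rw [norm_mul, Real.norm_eq_abs, Real.norm_eq_abs, abs_of_nonneg (gphi_nonneg x)]
  calc |g x| * gphi x ≤ (C * (1 + x ^ 2)) * gphi x := by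
          exact mul_le_mul_of_nonneg_right (h x) (gphi_nonneg x)
    _ = C * (1 + x ^ 2) * gphi x := by ring

lemma hasDerivAt_gphi (x : ℝ) : HasDerivAt gphi (-x * gphi x) x := by
  have h1 : HasDerivAt (fun y : ℝ => -y ^ 2 / 2) (-x) x := by
    have := ((hasDerivAt_pow 2 x).neg.div_const 2)
    simpa using this.congr_deriv (by ring)
  have h2 := (Real.hasDerivAt_exp (-x ^ 2 / 2)).comp x h1
  have h3 := h2.const_mul (Real.sqrt (2 * π))⁻¹
  refine h3.congr_deriv ?_
  unfold gphi; ring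

lemma tendsto_gphi_bound_atTop :
    Tendsto (fun x : ℝ => (1 + |x|) * gphi x) atTop (𝓝 0) := by
  have h1 : Tendsto (fun x : ℝ => Real.exp (-x ^ 2 / 2)) atTop (𝓝 0) := by
    apply Real.tendsto_exp_atBot.comp
    have : Tendsto (fun x : ℝ => x ^ 2 / 2) atTop atTop :=
      (tendsto_pow_atTop two_ne_zero).atTop_div_const (by norm_num)
    exact (tendsto_neg_atTop_atBot.comp this).congr fun x => by simp [Function.comp]; ring
  have h2 : Tendsto (fun x : ℝ => x ^ (1:ℝ) * Real.exp (-(1/2) * x ^ 2)) atTop (𝓝 0) :=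
    (rpow_mul_exp_neg_mul_sq_isLittleO_exp_neg (by norm_num) 1).isBigO.trans_tendsto
      (Real.tendsto_exp_atBot.comp (tendsto_id.const_mul_atTop_of_neg (by norm_num)))
  have h3 : Tendsto (fun x : ℝ => (Real.sqrt (2 * π))⁻¹ *
      (Real.exp (-x ^ 2 / 2) + x ^ (1:ℝ) * Real.exp (-(1/2) * x ^ 2))) atTop (𝓝 0) := by
    have := (h1.add h2).const_mul (Real.sqrt (2 * π))⁻¹
    simpa using this
  refine h3.congr' ?_
  filter_upwards [eventually_ge_atTop (0:ℝ)] with x hx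
  rw [abs_of_nonneg hx, Real.rpow_one]
  unfold gphi; ring_nf

lemma tendsto_gphi_bound_atBot :
    Tendsto (fun x : ℝ => (1 + |x|) * gphi x) atBot (𝓝 0) := by
  have := tendsto_gphi_bound_atTop.comp tendsto_neg_atBot_atTop
  refine this.congr fun x => ?_
  simp only [Function.comp_apply, abs_neg, gphi]
  ring_nf

lemma integrable_mul_gphi (g : ℝ → ℝ) (hg : Continuous g) (K : ℝ)
    (hK : ∀ x, |g x| ≤ K * (1 + x ^ 2)) :
    Integrable (fun x => g x * gphi x) volume := by
  refine Integrable.mono' ((integrable_gphi_poly.const_mul K).congr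
    (Filter.Eventually.of_forall fun x => (mul_assoc K _ _).symm))
    ((hg.mul continuous_gphi).aestronglyMeasurable)
    (Filter.Eventually.of_forall fun x => ?_)
  rw [norm_mul, Real.norm_eq_abs, Real.norm_eq_abs, abs_of_nonneg (gphi_nonneg x)]
  calc |g x| * gphi x ≤ (K * (1 + x ^ 2)) * gphi x :=
        mul_le_mul_of_nonneg_right (hK x) (gphi_nonneg x)
    _ = K * (1 + x ^ 2) * gphi x := by ring

lemma stein (h h' : ℝ → ℝ) (hd : ∀ x, HasDerivAt h (h' x) x) (hc' : Continuous h')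
    (C : ℝ) (hC : ∀ x, |h x| ≤ C * (1 + |x|)) (C2 : ℝ) (hC2 : ∀ x, |h' x| ≤ C2 * (1 + |x|)) :
    ∫ x, x * h x ∂(gaussianReal 0 1) = ∫ x, h' x ∂(gaussianReal 0 1) := by
  have hCpos : 0 ≤ C := by have := (abs_nonneg (h 0)).trans (hC 0); simpa using this
  have hC2pos : 0 ≤ C2 := by have := (abs_nonneg (h' 0)).trans (hC2 0); simpa using this
  have hcont : Continuous h := by
    have : Differentiable ℝ h := fun x => (hd x).differentiableAt
    exact this.continuous
  have int1 : Integrable (fun x => h' x * gphi x) volume := by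
    refine integrable_mul_gphi h' hc' (2 * C2) fun x => (hC2 x).trans ?_
    nlinarith [abs_nonneg x, sq_abs x, sq_nonneg (|x| - 1), sq_nonneg x]
  have int2 : Integrable (fun x => (x * h x) * gphi x) volume := by
    refine integrable_mul_gphi _ (continuous_id.mul hcont) (2 * C) fun x => ?_
    rw [abs_mul]
    calc |x| * |h x| ≤ |x| * (C * (1 + |x|)) :=
          mul_le_mul_of_nonneg_left (hC x) (abs_nonneg x)
      _ ≤ 2 * C * (1 + x ^ 2) := by nlinarith [abs_nonneg x, sq_abs x, sq_nonneg (|x| - 1)]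
  set Fd : ℝ → ℝ := fun x => h' x * gphi x + h x * (-x * gphi x) with hFddef
  have hFd : ∀ x, HasDerivAt (fun y => h y * gphi y) (Fd x) x :=
    fun x => (hd x).mul (hasDerivAt_gphi x)
  have intFd : Integrable Fd volume := by
    refine (int1.add int2.neg).congr (Filter.Eventually.of_forall fun x => ?_)
    simp only [hFddef, Pi.add_apply, Pi.neg_apply]
    ring
  have tend_top : Tendsto (fun x => h x * gphi x) atTop (𝓝 0) := by
    refine squeeze_zero_norm (a := fun x => C * ((1 + |x|) * gphi x)) (fun x => ?_) ?_
    · show ‖h x * gphi x‖ ≤ C * ((1 + |x|) * gphi x)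
      rw [norm_mul, Real.norm_eq_abs, Real.norm_eq_abs, abs_of_nonneg (gphi_nonneg x)]
      calc |h x| * gphi x ≤ (C * (1 + |x|)) * gphi x :=
            mul_le_mul_of_nonneg_right (hC x) (gphi_nonneg x)
        _ = C * ((1 + |x|) * gphi x) := by ring
    · simpa using tendsto_gphi_bound_atTop.const_mul C
  have tend_bot : Tendsto (fun x => h x * gphi x) atBot (𝓝 0) := by
    refine squeeze_zero_norm (a := fun x => C * ((1 + |x|) * gphi x)) (fun x => ?_) ?_
    · show ‖h x * gphi x‖ ≤ C * ((1 + |x|) * gphi x)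
      rw [norm_mul, Real.norm_eq_abs, Real.norm_eq_abs, abs_of_nonneg (gphi_nonneg x)]
      calc |h x| * gphi x ≤ (C * (1 + |x|)) * gphi x :=
            mul_le_mul_of_nonneg_right (hC x) (gphi_nonneg x)
        _ = C * ((1 + |x|) * gphi x) := by ring
    · simpa using tendsto_gphi_bound_atBot.const_mul C
  have hIic : ∫ x in Iic (0:ℝ), Fd x = h 0 * gphi 0 - 0 :=
    integral_Iic_of_hasDerivAt_of_tendsto' (fun x _ => hFd x) intFd.integrableOn tend_bot
  have hIoi : ∫ x in Ioi (0:ℝ), Fd x = 0 - h 0 * gphi 0 :=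
    integral_Ioi_of_hasDerivAt_of_tendsto' (fun x _ => hFd x) intFd.integrableOn tend_top
  have hsplit : (∫ x in Iic (0:ℝ), Fd x) + ∫ x in Ioi (0:ℝ), Fd x = ∫ x, Fd x :=
    intervalIntegral.integral_Iic_add_Ioi intFd.integrableOn intFd.integrableOn
  have key : ∫ x, Fd x = 0 := by rw [← hsplit, hIic, hIoi]; ring
  have hdiff : ∫ x, Fd x = (∫ x, h' x * gphi x) - ∫ x, (x * h x) * gphi x := by
    rw [← integral_sub int1 int2]
    refine integral_congr_ae (Filter.Eventually.of_forall fun x => ?_)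
    simp only [hFddef]
    ring
  rw [integral_gaussian_eq, integral_gaussian_eq]
  have := key.symm.trans hdiff
  linarith

lemma continuous_G (g : ℝ → ℝ) (hg : Continuous g) (C : ℝ) (hC : ∀ x, |g x| ≤ C) :
    Continuous (fun s : ℝ => ∫ x, g (Real.sqrt s * x) ∂(gaussianReal 0 1)) := by
  rw [continuous_iff_continuousAt]
  intro s0
  refine continuousAt_of_dominated (bound := fun _ => C) ?_ ?_ ?_ ?_
  · exact Filter.Eventually.of_forall fun s =>
      (hg.comp (continuous_const.mul continuous_id)).aestronglyMeasurable
  · exact Filter.Eventually.of_forall fun s =>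
      ae_of_all _ fun x => by rw [Real.norm_eq_abs]; exact hC _
  · exact integrable_const C
  · exact ae_of_all _ fun x =>
      (hg.comp ((Real.continuous_sqrt).mul continuous_const)).continuousAt

lemma hasDerivAt_G (f : ℝ → ℝ) (hf : ContDiff ℝ 2 f)
    (Cf : ℝ) (hCf : ∀ x, |f x| ≤ Cf) (C' : ℝ) (hC' : ∀ x, |deriv f x| ≤ C')
    (s0 : ℝ) (hs0 : 0 < s0) :
    HasDerivAt (fun s => ∫ x, f (Real.sqrt s * x) ∂(gaussianReal 0 1))
      (∫ x, deriv f (Real.sqrt s0 * x) * (1 / (2 * Real.sqrt s0) * x) ∂(gaussianReal 0 1)) s0 := by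
  have hC'0 : 0 ≤ C' := (abs_nonneg _).trans (hC' 0)
  have hdf : ∀ y, HasDerivAt f (deriv f y) y := fun y =>
    ((hf.differentiable (by norm_num)) y).hasDerivAt
  have hderc : Continuous (deriv f) := hf.continuous_deriv (by norm_num)
  have hhalf : (0:ℝ) < s0 / 2 := by linarith
  have hsq : (0:ℝ) < Real.sqrt (s0 / 2) := Real.sqrt_pos.2 hhalf
  set K : ℝ := C' * (1 / (2 * Real.sqrt (s0 / 2))) with hK
  have hK0 : 0 ≤ K := by positivity
  have hmem : ∀ s ∈ ball s0 (s0 / 2), s0 / 2 < s := by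
    intro s hs
    rw [mem_ball, Real.dist_eq, abs_lt] at hs
    linarith [hs.1]
  refine (hasDerivAt_integral_of_dominated_loc_of_deriv_le
    (F' := fun s x => deriv f (Real.sqrt s * x) * (1 / (2 * Real.sqrt s) * x)) (ball_mem_nhds s0 hhalf)
    (Filter.Eventually.of_forall fun s =>
      ((hf.continuous.comp (continuous_const.mul continuous_id)).aestronglyMeasurable))
    ?_ ?_ (bound := fun x => K * |x|) ?_ ?_ ?_).2
  · refine integrable_gaussian_of_poly_bound _
      ((hf.continuous.comp (continuous_const.mul continuous_id)).aestronglyMeasurable) Cf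
      fun x => (hCf _).trans ?_
    nlinarith [sq_nonneg x, (abs_nonneg (f 0)).trans (hCf 0)]
  · exact ((hderc.comp (continuous_const.mul continuous_id)).mul
      (continuous_const.mul continuous_id)).aestronglyMeasurable
  · refine ae_of_all _ fun x s hs => ?_
    have h1 : s0 / 2 < s := hmem s hs
    have hsqs : Real.sqrt (s0 / 2) ≤ Real.sqrt s := Real.sqrt_le_sqrt h1.le
    rw [norm_mul, Real.norm_eq_abs, Real.norm_eq_abs]
    have e1 : |1 / (2 * Real.sqrt s) * x| ≤ 1 / (2 * Real.sqrt (s0 / 2)) * |x| := by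
      rw [abs_mul]
      refine mul_le_mul_of_nonneg_right ?_ (abs_nonneg x)
      rw [abs_of_nonneg (by positivity)]
      exact one_div_le_one_div_of_le (by positivity) (by linarith)
    calc |deriv f (Real.sqrt s * x)| * |1 / (2 * Real.sqrt s) * x|
        ≤ C' * (1 / (2 * Real.sqrt (s0 / 2)) * |x|) :=
          mul_le_mul (hC' _) e1 (abs_nonneg _) hC'0
      _ = K * |x| := by rw [hK]; ring
  · refine integrable_gaussian_of_poly_bound _
      ((continuous_const.mul continuous_abs).aestronglyMeasurable) K fun x => ?_
    rw [abs_mul, abs_of_nonneg hK0, abs_abs]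
    nlinarith [abs_nonneg x, sq_abs x, sq_nonneg (|x| - 1)]
  · refine ae_of_all _ fun x s hs => ?_
    have h1 : (0:ℝ) < s := hhalf.trans (hmem s hs)
    have hsqrt := (Real.hasDerivAt_sqrt h1.ne').mul_const x
    exact (hdf (Real.sqrt s * x)).comp s hsqrt

theorem ou_integral_identity (f : ℝ → ℝ) (hf : ContDiff ℝ 2 f)
    (hb : ∃ C : ℝ, ∀ x, |f x| ≤ C)
    (hb' : ∃ C : ℝ, ∀ x, |deriv f x| ≤ C)
    (hb'' : ∃ C : ℝ, ∀ x, |deriv (deriv f) x| ≤ C)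
    (t : ℝ) (ht0 : 0 ≤ t) (ht1 : t ≤ 1) :
    ∫ s in Set.Ioc (0 : ℝ) t,
        (1 / s) * ∫ x, f (Real.sqrt s * x) * (x ^ 2 - 1) ∂(gaussianReal 0 1)
      = 2 * ((∫ x, f (Real.sqrt t * x) ∂(gaussianReal 0 1)) - f 0) := by
  obtain ⟨C, hC⟩ := hb
  obtain ⟨C', hC'⟩ := hb'
  obtain ⟨C'', hC''⟩ := hb''
  have hC0 : 0 ≤ C := (abs_nonneg _).trans (hC 0)
  have hC'0 : 0 ≤ C' := (abs_nonneg _).trans (hC' 0)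
  have hC''0 : 0 ≤ C'' := (abs_nonneg _).trans (hC'' 0)
  have hcont : Continuous f := hf.continuous
  have hdf : ∀ y, HasDerivAt f (deriv f y) y := fun y =>
    ((hf.differentiable (by norm_num)) y).hasDerivAt
  have hf' : ContDiff ℝ 1 (deriv f) := by
    have h2 : ContDiff ℝ ((1:WithTop ℕ∞) + 1) f := by
      convert hf using 2
      norm_num
    exact (contDiff_succ_iff_deriv.mp h2).2.2
  have hcont' : Continuous (deriv f) := hf'.continuous
  have hdf' : ∀ y, HasDerivAt (deriv f) (deriv (deriv f) y) y := fun y =>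
    ((hf'.differentiable one_ne_zero) y).hasDerivAt
  have hcont'' : Continuous (deriv (deriv f)) := hf'.continuous_deriv le_rfl
  set G : ℝ → ℝ := fun s => ∫ x, f (Real.sqrt s * x) ∂(gaussianReal 0 1) with hGdef
  set D : ℝ → ℝ := fun s => ∫ x, deriv (deriv f) (Real.sqrt s * x) ∂(gaussianReal 0 1) with hDdef
  -- Stein applications
  have stein1 : ∀ s : ℝ, 0 < s →
      ∫ x, x * deriv f (Real.sqrt s * x) ∂(gaussianReal 0 1) = Real.sqrt s * D s := by
    intro s hs
    have hsq : 0 < Real.sqrt s := Real.sqrt_pos.2 hs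
    have h1 : ∫ x, x * deriv f (Real.sqrt s * x) ∂(gaussianReal 0 1)
        = ∫ x, Real.sqrt s * deriv (deriv f) (Real.sqrt s * x) ∂(gaussianReal 0 1) := by
      refine stein _ _ (fun x => ?_) (continuous_const.mul
        (hcont''.comp (continuous_const.mul continuous_id))) C' (fun x => ?_)
        (Real.sqrt s * C'') (fun x => ?_)
      · exact ((hdf' (Real.sqrt s * x)).comp x
          ((hasDerivAt_id x).const_mul (Real.sqrt s))).congr_deriv (by ring)
      · have := hC' (Real.sqrt s * x)
        nlinarith [abs_nonneg x]
      · rw [abs_mul, abs_of_nonneg hsq.le]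
        calc Real.sqrt s * |deriv (deriv f) (Real.sqrt s * x)|
            ≤ Real.sqrt s * C'' := mul_le_mul_of_nonneg_left (hC'' _) hsq.le
          _ ≤ Real.sqrt s * C'' * (1 + |x|) :=
              le_mul_of_one_le_right (by positivity) (by linarith [abs_nonneg x])
    rw [h1, integral_const_mul]
  have stein2 : ∀ s : ℝ, 0 < s →
      ∫ x, x * (x * f (Real.sqrt s * x)) ∂(gaussianReal 0 1)
        = ∫ x, (f (Real.sqrt s * x) + x * (Real.sqrt s * deriv f (Real.sqrt s * x)))
            ∂(gaussianReal 0 1) := by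
    intro s hs
    have hsq : 0 < Real.sqrt s := Real.sqrt_pos.2 hs
    refine stein _ _ (fun x => ?_) ?_ C (fun x => ?_)
      (C + Real.sqrt s * C') (fun x => ?_)
    · exact ((hasDerivAt_id x).mul ((hdf (Real.sqrt s * x)).comp x
        ((hasDerivAt_id x).const_mul (Real.sqrt s)))).congr_deriv
        (by simp only [Function.comp_apply, id_eq]; ring)
    · exact (hcont.comp (continuous_const.mul continuous_id)).add
        (continuous_id.mul (continuous_const.mul
          (hcont'.comp (continuous_const.mul continuous_id))))
    · rw [abs_mul]
      have := hC (Real.sqrt s * x)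
      nlinarith [abs_nonneg x, abs_nonneg (f (Real.sqrt s * x))]
    · refine (abs_add_le _ _).trans ?_
      rw [abs_mul, abs_mul, abs_of_nonneg hsq.le]
      calc |f (Real.sqrt s * x)| + |x| * (Real.sqrt s * |deriv f (Real.sqrt s * x)|)
          ≤ C + |x| * (Real.sqrt s * C') :=
            add_le_add (hC _) (mul_le_mul_of_nonneg_left
              (mul_le_mul_of_nonneg_left (hC' _) hsq.le) (abs_nonneg x))
        _ ≤ (C + Real.sqrt s * C') * (1 + |x|) := by
            nlinarith [abs_nonneg x, mul_nonneg hsq.le hC'0,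
              mul_nonneg hC0 (abs_nonneg x),
              mul_nonneg (mul_nonneg hsq.le hC'0) (abs_nonneg x)]
  -- integrability facts
  have intB : ∀ s : ℝ, Integrable (fun x => f (Real.sqrt s * x)) (gaussianReal 0 1) := by
    intro s
    refine integrable_gaussian_of_poly_bound _
      ((hcont.comp (continuous_const.mul continuous_id)).aestronglyMeasurable) C fun x => ?_
    nlinarith [hC (Real.sqrt s * x), sq_nonneg x]
  have intA : ∀ s : ℝ, Integrable (fun x => x * (x * f (Real.sqrt s * x))) (gaussianReal 0 1) := by
    intro s
    refine integrable_gaussian_of_poly_bound _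
      ((continuous_id.mul (continuous_id.mul
        (hcont.comp (continuous_const.mul continuous_id)))).aestronglyMeasurable) C fun x => ?_
    rw [abs_mul, abs_mul]
    have := hC (Real.sqrt s * x)
    nlinarith [abs_nonneg x, sq_abs x, sq_nonneg x, abs_nonneg (f (Real.sqrt s * x))]
  have intC : ∀ s : ℝ, Integrable
      (fun x => x * (Real.sqrt s * deriv f (Real.sqrt s * x))) (gaussianReal 0 1) := by
    intro s
    refine integrable_gaussian_of_poly_bound _
      ((continuous_id.mul (continuous_const.mul
        (hcont'.comp (continuous_const.mul continuous_id)))).aestronglyMeasurable)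
      (Real.sqrt s * C' + 1) fun x => ?_
    rw [abs_mul, abs_mul, abs_of_nonneg (Real.sqrt_nonneg s)]
    have habs : |x| ≤ 1 + x ^ 2 := by nlinarith [sq_abs x, sq_nonneg (|x| - 1)]
    calc |x| * (Real.sqrt s * |deriv f (Real.sqrt s * x)|)
        ≤ |x| * (Real.sqrt s * C') := mul_le_mul_of_nonneg_left
          (mul_le_mul_of_nonneg_left (hC' _) (Real.sqrt_nonneg s)) (abs_nonneg x)
      _ ≤ (1 + x ^ 2) * (Real.sqrt s * C') := mul_le_mul_of_nonneg_right habs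
          (by positivity)
      _ ≤ (Real.sqrt s * C' + 1) * (1 + x ^ 2) := by nlinarith [sq_nonneg x]
  -- the key pointwise identity on (0, t]
  have hkey : ∀ s : ℝ, 0 < s →
      (1 / s) * (∫ x, f (Real.sqrt s * x) * (x ^ 2 - 1) ∂(gaussianReal 0 1)) = D s := by
    intro s hs
    have hsq : 0 < Real.sqrt s := Real.sqrt_pos.2 hs
    have e1 : ∫ x, f (Real.sqrt s * x) * (x ^ 2 - 1) ∂(gaussianReal 0 1)
        = (∫ x, x * (x * f (Real.sqrt s * x)) ∂(gaussianReal 0 1))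
          - ∫ x, f (Real.sqrt s * x) ∂(gaussianReal 0 1) := by
      rw [← integral_sub (intA s) (intB s)]
      refine integral_congr_ae (Filter.Eventually.of_forall fun x => ?_)
      simp only
      ring
    have e2 : ∫ x, (f (Real.sqrt s * x) + x * (Real.sqrt s * deriv f (Real.sqrt s * x)))
          ∂(gaussianReal 0 1)
        = (∫ x, f (Real.sqrt s * x) ∂(gaussianReal 0 1))
          + Real.sqrt s * ∫ x, x * deriv f (Real.sqrt s * x) ∂(gaussianReal 0 1) := by
      rw [integral_add (intB s) (intC s)]
      congr 1
      rw [← integral_const_mul]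
      refine integral_congr_ae (Filter.Eventually.of_forall fun x => ?_)
      simp only
      ring
    rw [e1, stein2 s hs, e2, stein1 s hs]
    have : Real.sqrt s * (Real.sqrt s * D s) = s * D s := by
      rw [← mul_assoc, Real.mul_self_sqrt hs.le]
    rw [this]
    field_simp
    ring
  -- derivative of G
  have hG' : ∀ s : ℝ, 0 < s → HasDerivAt G (D s / 2) s := by
    intro s hs
    have hsq : 0 < Real.sqrt s := Real.sqrt_pos.2 hs
    have h1 := hasDerivAt_G f hf C hC C' hC' s hs
    have h2 : ∫ x, deriv f (Real.sqrt s * x) * (1 / (2 * Real.sqrt s) * x) ∂(gaussianReal 0 1)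
        = D s / 2 := by
      have e : ∫ x, deriv f (Real.sqrt s * x) * (1 / (2 * Real.sqrt s) * x) ∂(gaussianReal 0 1)
          = (1 / (2 * Real.sqrt s)) * ∫ x, x * deriv f (Real.sqrt s * x) ∂(gaussianReal 0 1) := by
        rw [← integral_const_mul]
        refine integral_congr_ae (Filter.Eventually.of_forall fun x => ?_)
        simp only
        ring
      rw [e, stein1 s hs]
      field_simp
    rw [← h2]
    exact h1
  -- continuity
  have hGcont : Continuous G := continuous_G f hcont C hC
  have hDcont : Continuous D := continuous_G _ hcont'' C'' hC''
  -- FTC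
  have hG0 : G 0 = f 0 := by
    simp only [hGdef, Real.sqrt_zero, zero_mul, integral_const, measure_univ,
      ENNReal.toReal_one, smul_eq_mul, one_mul, probReal_univ]
  have hftc : ∫ s in (0:ℝ)..t, D s = 2 * G t - 2 * G 0 := by
    refine intervalIntegral.integral_eq_sub_of_hasDeriv_right_of_le ht0
      ((continuous_const.mul hGcont).continuousOn) (fun s hs => ?_) (hDcont.intervalIntegrable 0 t)
    exact (((hG' s hs.1).const_mul 2).congr_deriv (by ring)).hasDerivWithinAt
  have hcongr : ∫ s in Set.Ioc (0 : ℝ) t,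
        (1 / s) * ∫ x, f (Real.sqrt s * x) * (x ^ 2 - 1) ∂(gaussianReal 0 1)
      = ∫ s in Set.Ioc (0 : ℝ) t, D s := by
    refine setIntegral_congr_fun measurableSet_Ioc fun s hs => ?_
    exact hkey s hs.1
  rw [hcongr, ← intervalIntegral.integral_of_le ht0, hftc, hG0]
  ring
end

section
/- Let σ be the logistic sigmoid, λ > 0, ν ∈ ℝ, ζ ~ N(0,1), and t ∈ (0,1]. Then the map ν ↦ ∫₀^t E[σ(1−σ)(λ(ν + √s·ζ))] ds is differentiable and its derivative is bounded in absolute value by 2/λ. -/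
open MeasureTheory ProbabilityTheory Real Filter
open scoped ENNReal NNReal

/-- The logistic _root_.sigmoid. -/
noncomputable def sigmoid (t : ℝ) : ℝ := 1 / (1 + Real.exp (-t))



lemma sigmoid_pos (v : ℝ) : 0 < _root_.sigmoid v := by
  unfold _root_.sigmoid; positivity

lemma sigmoid_lt_one (v : ℝ) : _root_.sigmoid v < 1 := by
  unfold _root_.sigmoid
  rw [div_lt_one (by positivity)]
  linarith [Real.exp_pos (-v)]

lemma hasDerivAt_sigmoid (v : ℝ) :
    HasDerivAt _root_.sigmoid (_root_.sigmoid v * (1 - _root_.sigmoid v)) v := by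
  have h1 : HasDerivAt (fun v : ℝ => 1 + Real.exp (-v)) (-Real.exp (-v)) v := by
    simpa using ((Real.hasDerivAt_exp (-v)).comp v (hasDerivAt_neg v)).const_add 1
  have h2 := h1.inv (by positivity)
  have he : -(-Real.exp (-v)) / (1 + Real.exp (-v))^2 = _root_.sigmoid v * (1 - _root_.sigmoid v) := by
    unfold _root_.sigmoid
    have h := Real.exp_pos (-v)
    field_simp
    ring
  rw [← he]
  have hs : _root_.sigmoid = fun y : ℝ => (1 + Real.exp (-y))⁻¹ := by
    funext y; simp [_root_.sigmoid, one_div]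
  rw [hs]; exact h2

lemma continuous_sigmoid' : Continuous _root_.sigmoid := by
  unfold _root_.sigmoid
  exact continuous_const.div (by continuity) (fun x => ne_of_gt (by positivity))

lemma sigmoid_eq (v : ℝ) : _root_.sigmoid v = Real.exp v / (1 + Real.exp v) := by
  unfold _root_.sigmoid
  rw [div_eq_div_iff (by positivity) (by positivity)]
  rw [Real.exp_neg]
  have h := Real.exp_pos v
  field_simp
  ring

lemma hasDerivAt_logexp (v : ℝ) :
    HasDerivAt (fun v : ℝ => Real.log (1 + Real.exp v)) (_root_.sigmoid v) v := by
  have h1 : HasDerivAt (fun v : ℝ => 1 + Real.exp v) (Real.exp v) v :=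
    (Real.hasDerivAt_exp v).const_add 1
  have := h1.log (by positivity)
  rw [sigmoid_eq]
  simpa using this

lemma sig_deriv_le (v : ℝ) : _root_.sigmoid v * (1 - _root_.sigmoid v) ≤ 1/4 := by
  nlinarith [sq_nonneg (_root_.sigmoid v - 1/2)]

lemma sig_deriv_nonneg (v : ℝ) : 0 ≤ _root_.sigmoid v * (1 - _root_.sigmoid v) := by
  nlinarith [_root_.sigmoid_pos v, _root_.sigmoid_lt_one v]

lemma hasDerivAt_sigderiv (v : ℝ) :
    HasDerivAt (fun v => _root_.sigmoid v * (1 - _root_.sigmoid v))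
      (_root_.sigmoid v * (1 - _root_.sigmoid v) * (1 - 2 * _root_.sigmoid v)) v := by
  have h := (_root_.hasDerivAt_sigmoid v).mul ((_root_.hasDerivAt_sigmoid v).const_sub 1)
  refine h.congr_deriv ?_
  ring

lemma sigderiv2_abs_le (v : ℝ) :
    |_root_.sigmoid v * (1 - _root_.sigmoid v) * (1 - 2 * _root_.sigmoid v)| ≤ 1/4 := by
  have h1 := _root_.sigmoid_pos v
  have h2 := _root_.sigmoid_lt_one v
  rw [abs_mul]
  have : |_root_.sigmoid v * (1 - _root_.sigmoid v)| ≤ 1/4 := by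
    rw [abs_of_nonneg (sig_deriv_nonneg v)]; exact sig_deriv_le v
  have h3 : |1 - 2 * _root_.sigmoid v| ≤ 1 := by rw [abs_le]; constructor <;> nlinarith
  calc |_root_.sigmoid v * (1 - _root_.sigmoid v)| * |1 - 2 * _root_.sigmoid v| ≤ (1/4) * 1 :=
        mul_le_mul this h3 (abs_nonneg _) (by norm_num)
    _ = 1/4 := by norm_num

noncomputable def SK (lam t ν x : ℝ) : ℝ :=
  2 / (lam^2 * x^2) * (lam * Real.sqrt t * x * _root_.sigmoid (lam * (ν + Real.sqrt t * x))
    - Real.log (1 + Real.exp (lam * (ν + Real.sqrt t * x)))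
    + Real.log (1 + Real.exp (lam * ν)))

noncomputable def SM (lam t ν x : ℝ) : ℝ :=
  (lam * Real.sqrt t * x
      * (_root_.sigmoid (lam * (ν + Real.sqrt t * x)) * (1 - _root_.sigmoid (lam * (ν + Real.sqrt t * x))))
    - _root_.sigmoid (lam * (ν + Real.sqrt t * x)) + _root_.sigmoid (lam * ν)) / x^2

noncomputable def SG (lam t ν x : ℝ) : ℝ :=
  _root_.sigmoid (lam * (ν + Real.sqrt t * x)) - _root_.sigmoid (lam * ν)

noncomputable def SG' (lam t ν y : ℝ) : ℝ :=
  lam * Real.sqrt t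
    * (_root_.sigmoid (lam * (ν + Real.sqrt t * y)) * (1 - _root_.sigmoid (lam * (ν + Real.sqrt t * y))))



lemma hasDerivAt_SG (lam t ν : ℝ) (y : ℝ) :
    HasDerivAt (fun y => SG lam t ν y)
      (lam * Real.sqrt t
        * (_root_.sigmoid (lam * (ν + Real.sqrt t * y)) * (1 - _root_.sigmoid (lam * (ν + Real.sqrt t * y))))) y := by
  have hu : HasDerivAt (fun y : ℝ => lam * (ν + Real.sqrt t * y)) (lam * Real.sqrt t) y := by
    simpa using (((hasDerivAt_id y).const_mul (Real.sqrt t)).const_add ν).const_mul lam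
  have h := ((_root_.hasDerivAt_sigmoid (lam * (ν + Real.sqrt t * y))).comp y hu).sub_const
    (_root_.sigmoid (lam * ν))
  refine h.congr_deriv ?_
  ring

lemma hasDerivAt_SK (lam : ℝ) (hlam : 0 < lam) (t ν x : ℝ) (hx : x ≠ 0) :
    HasDerivAt (fun ν => SK lam t ν x) (2 / lam * SM lam t ν x) ν := by
  have hu : HasDerivAt (fun ν : ℝ => lam * (ν + Real.sqrt t * x)) lam ν := by
    simpa using ((hasDerivAt_id ν).add_const (Real.sqrt t * x)).const_mul lam
  have hv : HasDerivAt (fun ν : ℝ => lam * ν) lam ν := by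
    simpa using (hasDerivAt_id ν).const_mul lam
  have h1 : HasDerivAt (fun ν => _root_.sigmoid (lam * (ν + Real.sqrt t * x)))
      (_root_.sigmoid (lam * (ν + Real.sqrt t * x)) * (1 - _root_.sigmoid (lam * (ν + Real.sqrt t * x))) * lam) ν :=
    (_root_.hasDerivAt_sigmoid _).comp ν hu
  have h2 : HasDerivAt (fun ν => Real.log (1 + Real.exp (lam * (ν + Real.sqrt t * x))))
      (_root_.sigmoid (lam * (ν + Real.sqrt t * x)) * lam) ν :=
    (hasDerivAt_logexp _).comp ν hu
  have h3 : HasDerivAt (fun ν => Real.log (1 + Real.exp (lam * ν)))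
      (_root_.sigmoid (lam * ν) * lam) ν :=
    (hasDerivAt_logexp _).comp ν hv
  have h4 := (((h1.const_mul (lam * Real.sqrt t * x)).sub h2).add h3).const_mul
    (2 / (lam^2 * x^2))
  refine h4.congr_deriv ?_
  unfold SM
  field_simp

lemma SF_eq_SK (lam : ℝ) (hlam : 0 < lam) (t : ℝ) (ht0 : 0 < t)
    (ν x : ℝ) (hx : x ≠ 0) :
    ∫ s in Set.Ioc (0:ℝ) t,
        _root_.sigmoid (lam * (ν + Real.sqrt s * x)) * (1 - _root_.sigmoid (lam * (ν + Real.sqrt s * x)))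
      = SK lam t ν x := by
  set u : ℝ → ℝ := fun s => lam * (ν + Real.sqrt s * x) with hu_def
  set A : ℝ → ℝ := fun s =>
    2 / (lam^2 * x^2) * (lam * Real.sqrt s * x * _root_.sigmoid (u s)
      - Real.log (1 + Real.exp (u s))) with hA_def
  have hu_cont : Continuous u := by
    apply continuous_const.mul
    exact continuous_const.add (Real.continuous_sqrt.mul continuous_const)
  have hcont : ContinuousOn A (Set.Icc 0 t) := by
    apply Continuous.continuousOn
    apply continuous_const.mul
    apply Continuous.sub
    · exact ((continuous_const.mul Real.continuous_sqrt).mul continuous_const).mul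
        (continuous_sigmoid'.comp hu_cont)
    · exact Continuous.log (continuous_const.add (Real.continuous_exp.comp hu_cont))
        (fun s => ne_of_gt (by positivity))
  have hderiv : ∀ s ∈ Set.Ioo (0:ℝ) t, HasDerivAt A
      (_root_.sigmoid (u s) * (1 - _root_.sigmoid (u s))) s := by
    intro s hs
    have hs0 : (0:ℝ) < s := hs.1
    have hsq : Real.sqrt s ≠ 0 := ne_of_gt (Real.sqrt_pos.mpr hs0)
    have hu : HasDerivAt u (lam * (1 / (2 * Real.sqrt s) * x)) s := by
      exact (((Real.hasDerivAt_sqrt (ne_of_gt hs0)).mul_const x).const_add ν).const_mul lam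
    have h1 : HasDerivAt (fun s => lam * Real.sqrt s * x)
        (lam * (1 / (2 * Real.sqrt s)) * x) s :=
      ((Real.hasDerivAt_sqrt (ne_of_gt hs0)).const_mul lam).mul_const x
    have h2 : HasDerivAt (fun s => _root_.sigmoid (u s))
        (_root_.sigmoid (u s) * (1 - _root_.sigmoid (u s)) * (lam * (1 / (2 * Real.sqrt s) * x))) s :=
      (_root_.hasDerivAt_sigmoid (u s)).comp s hu
    have h3 : HasDerivAt (fun s => Real.log (1 + Real.exp (u s)))
        (_root_.sigmoid (u s) * (lam * (1 / (2 * Real.sqrt s) * x))) s :=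
      (hasDerivAt_logexp (u s)).comp s hu
    have h4 := ((h1.mul h2).sub h3).const_mul (2 / (lam^2 * x^2))
    refine h4.congr_deriv ?_
    field_simp
    ring
  have hint : IntervalIntegrable
      (fun s => _root_.sigmoid (u s) * (1 - _root_.sigmoid (u s))) volume 0 t := by
    apply Continuous.intervalIntegrable
    exact (continuous_sigmoid'.comp hu_cont).mul
      (continuous_const.sub (continuous_sigmoid'.comp hu_cont))
  have key := intervalIntegral.integral_eq_sub_of_hasDeriv_right_of_le ht0.le hcont
    (fun s hs => (hderiv s hs).hasDerivWithinAt) hint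
  rw [intervalIntegral.integral_of_le ht0.le] at key
  rw [key]
  simp only [hA_def, hu_def, Real.sqrt_zero, SK]
  ring_nf

lemma SG_deriv_bound (lam : ℝ) (hlam : 0 ≤ lam) (t : ℝ) (ht : 0 ≤ t) (ν y : ℝ) :
    |lam * Real.sqrt t
        * (_root_.sigmoid (lam * (ν + Real.sqrt t * y)) * (1 - _root_.sigmoid (lam * (ν + Real.sqrt t * y))))|
      ≤ lam * Real.sqrt t / 4 := by
  rw [abs_mul]
  have h1 : |lam * Real.sqrt t| = lam * Real.sqrt t := abs_of_nonneg (by positivity)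
  rw [h1]
  have h2 := sig_deriv_le (lam * (ν + Real.sqrt t * y))
  have h3 := sig_deriv_nonneg (lam * (ν + Real.sqrt t * y))
  rw [abs_of_nonneg h3]
  have : lam * Real.sqrt t ≥ 0 := by positivity
  nlinarith

/-- The derivative function of `SG`. -/

lemma hasDerivAt_SG' (lam t ν : ℝ) (y : ℝ) :
    HasDerivAt (fun y => SG' lam t ν y)
      (lam * Real.sqrt t * (_root_.sigmoid (lam * (ν + Real.sqrt t * y))
          * (1 - _root_.sigmoid (lam * (ν + Real.sqrt t * y)))
          * (1 - 2 * _root_.sigmoid (lam * (ν + Real.sqrt t * y))) * (lam * Real.sqrt t))) y := by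
  have hu : HasDerivAt (fun y : ℝ => lam * (ν + Real.sqrt t * y)) (lam * Real.sqrt t) y := by
    simpa using (((hasDerivAt_id y).const_mul (Real.sqrt t)).const_add ν).const_mul lam
  exact ((hasDerivAt_sigderiv _).comp y hu).const_mul (lam * Real.sqrt t)

lemma SG'_lipschitz (lam : ℝ) (hlam : 0 ≤ lam) (t : ℝ) (ht : 0 ≤ t) (ν : ℝ) (y z : ℝ) :
    |SG' lam t ν z - SG' lam t ν y| ≤ lam^2 * t / 4 * |z - y| := by
  have key := Convex.norm_image_sub_le_of_norm_hasDerivWithin_le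
    (f := fun y => SG' lam t ν y)
    (f' := fun y => lam * Real.sqrt t * (_root_.sigmoid (lam * (ν + Real.sqrt t * y))
          * (1 - _root_.sigmoid (lam * (ν + Real.sqrt t * y)))
          * (1 - 2 * _root_.sigmoid (lam * (ν + Real.sqrt t * y))) * (lam * Real.sqrt t)))
    (s := Set.univ) (C := lam^2 * t / 4)
    (fun w _ => (hasDerivAt_SG' lam t ν w).hasDerivWithinAt)
    (fun w _ => ?_) convex_univ (Set.mem_univ y) (Set.mem_univ z)
  · exact key
  · have h := sigderiv2_abs_le (lam * (ν + Real.sqrt t * w))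
    have hsq : Real.sqrt t * Real.sqrt t = t := Real.mul_self_sqrt ht
    have hst : (0:ℝ) ≤ lam * Real.sqrt t := by positivity
    calc ‖lam * Real.sqrt t * (_root_.sigmoid (lam * (ν + Real.sqrt t * w))
          * (1 - _root_.sigmoid (lam * (ν + Real.sqrt t * w)))
          * (1 - 2 * _root_.sigmoid (lam * (ν + Real.sqrt t * w))) * (lam * Real.sqrt t))‖
        = (lam * Real.sqrt t) * (lam * Real.sqrt t)
          * |_root_.sigmoid (lam * (ν + Real.sqrt t * w))
          * (1 - _root_.sigmoid (lam * (ν + Real.sqrt t * w)))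
          * (1 - 2 * _root_.sigmoid (lam * (ν + Real.sqrt t * w)))| := by
          rw [Real.norm_eq_abs]
          rw [show lam * Real.sqrt t * (_root_.sigmoid (lam * (ν + Real.sqrt t * w))
            * (1 - _root_.sigmoid (lam * (ν + Real.sqrt t * w)))
            * (1 - 2 * _root_.sigmoid (lam * (ν + Real.sqrt t * w))) * (lam * Real.sqrt t))
            = (lam * Real.sqrt t) * (lam * Real.sqrt t) * (_root_.sigmoid (lam * (ν + Real.sqrt t * w))
            * (1 - _root_.sigmoid (lam * (ν + Real.sqrt t * w)))
            * (1 - 2 * _root_.sigmoid (lam * (ν + Real.sqrt t * w)))) from by ring]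
          rw [abs_mul, abs_of_nonneg (by positivity)]
      _ ≤ (lam * Real.sqrt t) * (lam * Real.sqrt t) * (1/4) := by
          apply mul_le_mul_of_nonneg_left h (by positivity)
      _ = lam^2 * t / 4 := by rw [show (lam * Real.sqrt t) * (lam * Real.sqrt t)
            = lam^2 * (Real.sqrt t * Real.sqrt t) from by ring, hsq]; ring

lemma SG_taylor (lam : ℝ) (hlam : 0 ≤ lam) (t : ℝ) (ht : 0 ≤ t) (ν x : ℝ) :
    |SG lam t ν x - x * SG' lam t ν 0| ≤ lam^2 * t / 4 * x^2 := by
  have habs : ∀ y ∈ Set.uIcc (0:ℝ) x, |y| ≤ |x| := by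
    intro y hy
    rw [Set.mem_uIcc] at hy
    rw [abs_le]
    rcases hy with ⟨h1, h2⟩ | ⟨h1, h2⟩ <;> constructor <;> cases abs_cases x <;> linarith
  have key := Convex.norm_image_sub_le_of_norm_hasDerivWithin_le
    (f := fun y => SG lam t ν y - y * SG' lam t ν 0)
    (f' := fun y => SG' lam t ν y - SG' lam t ν 0)
    (s := Set.uIcc (0:ℝ) x) (C := lam^2 * t / 4 * |x|)
    (fun w _ => ?_) (fun w hw => ?_) (convex_uIcc 0 x) Set.left_mem_uIcc Set.right_mem_uIcc
  · have h0 : SG lam t ν 0 = 0 := by unfold SG; simp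
    simp only [h0, zero_mul, sub_zero, Real.norm_eq_abs] at key
    calc |SG lam t ν x - x * SG' lam t ν 0| ≤ lam^2 * t / 4 * |x| * |x| := key
      _ = lam^2 * t / 4 * x^2 := by
          rw [mul_assoc, abs_mul_abs_self, ← sq]
  · exact ((hasDerivAt_SG lam t ν w).sub ((hasDerivAt_id w).mul_const _)).hasDerivWithinAt.congr_deriv
      (by simp [SG'])
  · rw [Real.norm_eq_abs]
    calc |SG' lam t ν w - SG' lam t ν 0| ≤ lam^2 * t / 4 * |w - 0| :=
          SG'_lipschitz lam hlam t ht ν 0 w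
      _ ≤ lam^2 * t / 4 * |x| := by
          rw [sub_zero]
          exact mul_le_mul_of_nonneg_left (habs w hw) (by positivity)

lemma SM_bound (lam : ℝ) (hlam : 0 ≤ lam) (t : ℝ) (ht : 0 ≤ t) (ν x : ℝ) (hx : x ≠ 0) :
    |SM lam t ν x| ≤ lam^2 * t / 2 := by
  have hnum : lam * Real.sqrt t * x
      * (_root_.sigmoid (lam * (ν + Real.sqrt t * x)) * (1 - _root_.sigmoid (lam * (ν + Real.sqrt t * x))))
      - _root_.sigmoid (lam * (ν + Real.sqrt t * x)) + _root_.sigmoid (lam * ν)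
      = x * (SG' lam t ν x - SG' lam t ν 0) - (SG lam t ν x - x * SG' lam t ν 0) := by
    unfold SG SG'; ring
  have h1 : |x * (SG' lam t ν x - SG' lam t ν 0)| ≤ lam^2 * t / 4 * x^2 := by
    rw [abs_mul]
    calc |x| * |SG' lam t ν x - SG' lam t ν 0| ≤ |x| * (lam^2 * t / 4 * |x - 0|) :=
          mul_le_mul_of_nonneg_left (SG'_lipschitz lam hlam t ht ν 0 x) (abs_nonneg x)
      _ = lam^2 * t / 4 * x^2 := by
          rw [sub_zero]
          rw [show |x| * (lam ^ 2 * t / 4 * |x|) = lam ^ 2 * t / 4 * (|x| * |x|) from by ring]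
          rw [abs_mul_abs_self, ← sq]
  have h2 := SG_taylor lam hlam t ht ν x
  unfold SM
  rw [hnum, abs_div, abs_of_nonneg (sq_nonneg x)]
  rw [div_le_iff₀ (by positivity)]
  have h3 := abs_sub (x * (SG' lam t ν x - SG' lam t ν 0)) (SG lam t ν x - x * SG' lam t ν 0)
  have h4 : lam^2 * t / 4 * x^2 + lam^2 * t / 4 * x^2 = lam^2 * t / 2 * x^2 := by ring
  linarith


lemma phi_eq (x : ℝ) :
    gaussianPDFReal 0 1 x = (Real.sqrt (2 * π))⁻¹ * Real.exp (-(x^2) / 2) := by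
  simp [gaussianPDFReal]

lemma hasDerivAt_phi (x : ℝ) :
    HasDerivAt (fun x => gaussianPDFReal 0 1 x) (-x * gaussianPDFReal 0 1 x) x := by
  have h1 : HasDerivAt (fun x : ℝ => -(x^2) / 2) (-x) x := by
    have := ((hasDerivAt_pow 2 x).neg).div_const 2
    refine this.congr_deriv ?_
    simp; ring
  have h2 := (Real.hasDerivAt_exp (-(x^2)/2)).comp x h1
  have h3 := h2.const_mul ((Real.sqrt (2 * π))⁻¹)
  have he : (fun x => gaussianPDFReal 0 1 x)
      = fun x => (Real.sqrt (2 * π))⁻¹ * Real.exp (-(x^2) / 2) := funext phi_eq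
  rw [he, phi_eq]
  refine h3.congr_deriv ?_
  ring

lemma phi_tendsto_top : Tendsto (fun x => gaussianPDFReal 0 1 x) atTop (nhds 0) := by
  have he : (fun x => gaussianPDFReal 0 1 x)
      = fun x => (Real.sqrt (2 * π))⁻¹ * Real.exp (-(x^2) / 2) := funext phi_eq
  rw [he]
  rw [show (0:ℝ) = (Real.sqrt (2 * π))⁻¹ * 0 from by ring]
  apply Tendsto.const_mul
  apply Real.tendsto_exp_atBot.comp
  have h1 : Tendsto (fun x : ℝ => x^2) atTop atTop := tendsto_pow_atTop (by norm_num)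
  have h2 : Tendsto (fun y : ℝ => -y / 2) atTop atBot := by
    apply Tendsto.atBot_div_const (by norm_num)
    exact tendsto_neg_atTop_atBot
  exact h2.comp h1

lemma phi_tendsto_bot : Tendsto (fun x => gaussianPDFReal 0 1 x) atBot (nhds 0) := by
  have h := phi_tendsto_top.comp (tendsto_neg_atBot_atTop)
  have : (fun x : ℝ => gaussianPDFReal 0 1 (-x)) = fun x => gaussianPDFReal 0 1 x := by
    funext x; rw [phi_eq, phi_eq]; ring_nf
  rwa [Function.comp_def, this] at h

lemma integral_gaussianReal_eq (f : ℝ → ℝ) :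
    ∫ x, f x ∂(gaussianReal 0 1) = ∫ x, f x * gaussianPDFReal 0 1 x := by
  rw [gaussianReal_of_var_ne_zero 0 one_ne_zero]
  have hd : gaussianPDF 0 1 = fun x => ((gaussianPDFReal 0 1 x).toNNReal : ℝ≥0∞) := rfl
  rw [hd, integral_withDensity_eq_integral_smul
    ((measurable_gaussianPDFReal 0 1).real_toNNReal) f]
  congr 1
  funext x
  rw [NNReal.smul_def, smul_eq_mul, Real.coe_toNNReal _ (gaussianPDFReal_nonneg 0 1 x), mul_comm]


lemma continuous_SG (lam t ν : ℝ) : Continuous (fun x => SG lam t ν x) := by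
  unfold SG
  apply Continuous.sub _ continuous_const
  exact continuous_sigmoid'.comp (by continuity)

lemma SG_le_one (lam t ν x : ℝ) : |SG lam t ν x| ≤ 1 := by
  unfold SG
  rw [abs_le]
  have h1 := _root_.sigmoid_pos (lam * (ν + Real.sqrt t * x))
  have h2 := _root_.sigmoid_lt_one (lam * (ν + Real.sqrt t * x))
  have h3 := _root_.sigmoid_pos (lam * ν)
  have h4 := _root_.sigmoid_lt_one (lam * ν)
  constructor <;> nlinarith

lemma SG_lin_bound (lam : ℝ) (hlam : 0 ≤ lam) (t : ℝ) (ht : 0 ≤ t) (ν x : ℝ) :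
    |SG lam t ν x| ≤ lam * Real.sqrt t / 4 * |x| := by
  have key := Convex.norm_image_sub_le_of_norm_hasDerivWithin_le
    (f := fun x => SG lam t ν x)
    (f' := fun y => lam * Real.sqrt t
      * (_root_.sigmoid (lam * (ν + Real.sqrt t * y)) * (1 - _root_.sigmoid (lam * (ν + Real.sqrt t * y)))))
    (s := Set.univ) (C := lam * Real.sqrt t / 4)
    (fun w _ => (hasDerivAt_SG lam t ν w).hasDerivWithinAt)
    (fun w _ => SG_deriv_bound lam hlam t ht ν w) convex_univ (Set.mem_univ 0) (Set.mem_univ x)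
  have h0 : SG lam t ν 0 = 0 := by unfold SG; simp
  simpa [h0] using key

lemma measurable_SM (lam t ν : ℝ) : Measurable (fun x => SM lam t ν x) := by
  unfold SM
  apply Measurable.div _ (measurable_id.pow_const 2)
  have hs : Continuous (fun x : ℝ => _root_.sigmoid (lam * (ν + Real.sqrt t * x))) :=
    continuous_sigmoid'.comp (by continuity)
  exact ((((continuous_const.mul continuous_id).mul
    (hs.mul (continuous_const.sub hs))).sub hs).add continuous_const).measurable

lemma SM_bound_all (lam : ℝ) (hlam : 0 ≤ lam) (t : ℝ) (ht : 0 ≤ t) (ν x : ℝ) :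
    |SM lam t ν x| ≤ lam^2 * t / 2 := by
  rcases eq_or_ne x 0 with rfl | hx
  · have : SM lam t ν 0 = 0 := by
      unfold SM
      norm_num
    rw [this, abs_zero]
    positivity
  · exact SM_bound lam hlam t ht ν x hx

lemma stein_s12 (lam : ℝ) (hlam : 0 < lam) (t : ℝ) (ht0 : 0 < t) (ν : ℝ) :
    ∫ x, SM lam t ν x ∂(gaussianReal 0 1) = ∫ x, SG lam t ν x ∂(gaussianReal 0 1) := by
  set φ : ℝ → ℝ := fun x => gaussianPDFReal 0 1 x with hφ_def
  have hφ_cont : Continuous φ := by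
    rw [show φ = fun x => (Real.sqrt (2*π))⁻¹ * Real.exp (-(x^2)/2) from funext phi_eq]
    continuity
  have hφ_nonneg : ∀ x, 0 ≤ φ x := gaussianPDFReal_nonneg 0 1
  have hφ_int : Integrable φ := integrable_gaussianPDFReal 0 1
  set h : ℝ → ℝ := fun x => if x = 0 then SG' lam t ν 0 else SG lam t ν x / x with hh_def
  set F : ℝ → ℝ := fun x => h x * φ x with hF_def
  set D : ℝ → ℝ := fun x => (SM lam t ν x - SG lam t ν x) * φ x with hD_def
  -- integrability
  have hD_meas : AEStronglyMeasurable D volume := by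
    apply Measurable.aestronglyMeasurable
    exact ((measurable_SM lam t ν).sub (continuous_SG lam t ν).measurable).mul
      (measurable_gaussianPDFReal 0 1)
  have hD_int : Integrable D := by
    apply Integrable.mono' (hφ_int.const_mul (lam^2 * t / 2 + 1)) hD_meas
    filter_upwards with x
    rw [hD_def, Real.norm_eq_abs, abs_mul, abs_of_nonneg (hφ_nonneg x)]
    apply mul_le_mul_of_nonneg_right _ (hφ_nonneg x)
    calc |SM lam t ν x - SG lam t ν x| ≤ |SM lam t ν x| + |SG lam t ν x| := abs_sub _ _
      _ ≤ lam^2 * t / 2 + 1 := add_le_add (SM_bound_all lam hlam.le t ht0.le ν x) (SG_le_one _ _ _ _)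
  -- derivative of F away from 0
  have hF' : ∀ x : ℝ, x ≠ 0 → HasDerivAt F (D x) x := by
    intro x hx
    have hg := hasDerivAt_SG lam t ν x
    have hdiv := hg.div (hasDerivAt_id x) hx
    have hev : (fun y => SG lam t ν y / y) =ᶠ[nhds x] h := by
      filter_upwards [eventually_ne_nhds hx] with y hy
      rw [hh_def]; simp [hy]
    have hh : HasDerivAt h ((lam * Real.sqrt t
        * (_root_.sigmoid (lam * (ν + Real.sqrt t * x)) * (1 - _root_.sigmoid (lam * (ν + Real.sqrt t * x))))
        * x - SG lam t ν x * 1) / x^2) x := by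
      exact hdiv.congr_of_eventuallyEq hev.symm
    have hmul := hh.mul (hasDerivAt_phi x)
    have hhx : h x = SG lam t ν x / x := by rw [hh_def]; simp [hx]
    rw [hF_def, hD_def]
    refine hmul.congr_deriv ?_
    rw [hhx]
    unfold SM SG
    field_simp
    ring
  -- continuity of F at 0
  have hh0 : h 0 = SG' lam t ν 0 := by rw [hh_def]; simp
  have hhcont : ContinuousAt h 0 := by
    have hslope := hasDerivAt_iff_tendsto_slope.mp (hasDerivAt_SG lam t ν 0)
    have hcong : ∀ y : ℝ, y ≠ 0 → slope (fun y => SG lam t ν y) 0 y = h y := by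
      intro y hy
      rw [slope_def_field, hh_def]
      have h0 : SG lam t ν 0 = 0 := by unfold SG; simp
      simp [hy, h0]
    unfold ContinuousAt
    rw [← nhdsNE_sup_pure 0]
    rw [tendsto_sup]
    constructor
    · rw [hh0]
      apply Tendsto.congr' _ hslope
      filter_upwards [self_mem_nhdsWithin] with y hy
      exact hcong y hy
    · exact tendsto_pure_nhds h 0
  have hFcont : ContinuousAt F 0 := hhcont.mul hφ_cont.continuousAt
  have hhb : ∀ x, |h x| ≤ lam * Real.sqrt t / 4 := by
    intro x
    rcases eq_or_ne x 0 with rfl | hx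
    · rw [hh0]
      exact SG_deriv_bound lam hlam.le t ht0.le ν 0
    · rw [hh_def]
      simp only [if_neg hx]
      rw [abs_div, div_le_iff₀ (abs_pos.mpr hx)]
      exact SG_lin_bound lam hlam.le t ht0.le ν x
  have hnorm : ∀ x, ‖F x‖ ≤ lam * Real.sqrt t / 4 * φ x := by
    intro x
    rw [hF_def, Real.norm_eq_abs, abs_mul, abs_of_nonneg (hφ_nonneg x)]
    exact mul_le_mul_of_nonneg_right (hhb x) (hφ_nonneg x)
  have hc0 : Tendsto (fun x => lam * Real.sqrt t / 4 * φ x) atTop (nhds 0) := by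
    have := phi_tendsto_top.const_mul (lam * Real.sqrt t / 4)
    simpa using this
  have hc0' : Tendsto (fun x => lam * Real.sqrt t / 4 * φ x) atBot (nhds 0) := by
    have := phi_tendsto_bot.const_mul (lam * Real.sqrt t / 4)
    simpa using this
  have hFtop : Tendsto F atTop (nhds 0) := squeeze_zero_norm hnorm hc0
  have hFbot : Tendsto F atBot (nhds 0) := squeeze_zero_norm hnorm hc0'
  have hIoi : ∫ x in Set.Ioi (0:ℝ), D x = 0 - F 0 :=
    integral_Ioi_of_hasDerivAt_of_tendsto hFcont.continuousWithinAt
      (fun x hx => hF' x (ne_of_gt hx)) hD_int.integrableOn hFtop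
  have hIic : ∫ x in Set.Iic (0:ℝ), D x = F 0 - 0 :=
    integral_Iic_of_hasDerivAt_of_tendsto hFcont.continuousWithinAt
      (fun x hx => hF' x (ne_of_lt hx)) hD_int.integrableOn hFbot
  have hD0 : ∫ x, D x = 0 := by
    rw [← setIntegral_univ (μ := volume) (f := D), ← Set.Iic_union_Ioi (a := (0:ℝ)),
      setIntegral_union (Set.Iic_disjoint_Ioi le_rfl) measurableSet_Ioi
        hD_int.integrableOn hD_int.integrableOn, hIic, hIoi]
    ring
  have hSM_meas : AEStronglyMeasurable (fun x => SM lam t ν x * φ x) volume :=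
    ((measurable_SM lam t ν).mul (measurable_gaussianPDFReal 0 1)).aestronglyMeasurable
  have hSG_meas : AEStronglyMeasurable (fun x => SG lam t ν x * φ x) volume :=
    ((continuous_SG lam t ν).measurable.mul (measurable_gaussianPDFReal 0 1)).aestronglyMeasurable
  have hSMφ_int : Integrable (fun x => SM lam t ν x * φ x) := by
    apply Integrable.mono' (hφ_int.const_mul (lam^2 * t / 2)) hSM_meas
    filter_upwards with x
    rw [Real.norm_eq_abs, abs_mul, abs_of_nonneg (hφ_nonneg x)]
    exact mul_le_mul_of_nonneg_right (SM_bound_all lam hlam.le t ht0.le ν x) (hφ_nonneg x)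
  have hSGφ_int : Integrable (fun x => SG lam t ν x * φ x) := by
    apply Integrable.mono' (hφ_int.const_mul 1) hSG_meas
    filter_upwards with x
    rw [Real.norm_eq_abs, abs_mul, abs_of_nonneg (hφ_nonneg x)]
    exact mul_le_mul_of_nonneg_right (SG_le_one lam t ν x) (hφ_nonneg x)
  have hsub : ∫ x, D x = (∫ x, SM lam t ν x * φ x) - ∫ x, SG lam t ν x * φ x := by
    rw [← integral_sub hSMφ_int hSGφ_int]
    congr 1
    funext x
    rw [hD_def]
    ring
  rw [integral_gaussianReal_eq, integral_gaussianReal_eq]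
  have := hsub ▸ hD0
  linarith

lemma SM_integral_bound (lam : ℝ) (hlam : 0 < lam) (t : ℝ) (ht0 : 0 < t) (ν : ℝ) :
    |∫ x, SM lam t ν x ∂(gaussianReal 0 1)| ≤ 1 := by
  rw [stein_s12 lam hlam t ht0 ν]
  have h := norm_integral_le_of_norm_le_const (μ := gaussianReal 0 1)
    (f := fun x => SG lam t ν x) (C := 1) (Filter.Eventually.of_forall (fun x => by
      rw [Real.norm_eq_abs]; exact SG_le_one lam t ν x))
  simpa using h


noncomputable def SF (lam t ν x : ℝ) : ℝ :=
  ∫ s in Set.Ioc (0:ℝ) t,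
    _root_.sigmoid (lam * (ν + Real.sqrt s * x)) * (1 - _root_.sigmoid (lam * (ν + Real.sqrt s * x)))

lemma gauss_ae_ne_zero : ∀ᵐ x ∂(gaussianReal 0 1), x ≠ 0 := by
  have h0 : (gaussianReal 0 1) {(0:ℝ)} = 0 :=
    gaussianReal_absolutelyContinuous 0 one_ne_zero (Real.volume_singleton)
  rw [ae_iff]
  convert h0 using 2
  ext x
  simp

lemma measurable_SK (lam t ν : ℝ) : Measurable (fun x => SK lam t ν x) := by
  unfold SK
  have hs : Continuous (fun x : ℝ => _root_.sigmoid (lam * (ν + Real.sqrt t * x))) :=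
    continuous_sigmoid'.comp (by continuity)
  have hl : Continuous (fun x : ℝ => Real.log (1 + Real.exp (lam * (ν + Real.sqrt t * x)))) := by
    apply Continuous.log
    · exact continuous_const.add (Real.continuous_exp.comp (by continuity))
    · intro x; positivity
  apply Measurable.mul
  · exact measurable_const.div ((measurable_const.mul (measurable_id.pow_const 2)))
  · exact ((((continuous_const.mul continuous_id).mul hs).sub hl).add continuous_const).measurable

lemma integrand_cont (lam t ν : ℝ) : Continuous (fun p : ℝ × ℝ =>
    _root_.sigmoid (lam * (ν + Real.sqrt p.1 * p.2)) * (1 - _root_.sigmoid (lam * (ν + Real.sqrt p.1 * p.2)))) := by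
  have hu : Continuous (fun p : ℝ × ℝ => lam * (ν + Real.sqrt p.1 * p.2)) := by
    apply continuous_const.mul
    exact continuous_const.add ((Real.continuous_sqrt.comp continuous_fst).mul continuous_snd)
  exact (continuous_sigmoid'.comp hu).mul (continuous_const.sub (continuous_sigmoid'.comp hu))

instance ioc_finite (t : ℝ) : IsFiniteMeasure (volume.restrict (Set.Ioc (0:ℝ) t)) := by
  constructor
  rw [Measure.restrict_apply_univ]
  exact measure_Ioc_lt_top

lemma swap_integrals (lam : ℝ) (hlam : 0 < lam) (t : ℝ) (ht0 : 0 < t) (ν : ℝ) :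
    (∫ s in Set.Ioc (0:ℝ) t, ∫ x, _root_.sigmoid (lam * (ν + Real.sqrt s * x))
        * (1 - _root_.sigmoid (lam * (ν + Real.sqrt s * x))) ∂(gaussianReal 0 1))
      = ∫ x, SF lam t ν x ∂(gaussianReal 0 1) := by
  unfold SF
  apply integral_integral_swap
  apply Integrable.mono' (g := fun _ => (1:ℝ))
    (integrable_const 1) ((integrand_cont lam t ν).aestronglyMeasurable)
  filter_upwards with p
  rw [Real.norm_eq_abs, abs_of_nonneg (sig_deriv_nonneg _)]
  linarith [sig_deriv_le (lam * (ν + Real.sqrt p.1 * p.2))]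

lemma SF_le (lam t : ℝ) (ht0 : 0 < t) (ν x : ℝ) : ‖SF lam t ν x‖ ≤ 1/4 * t := by
  unfold SF
  have h := norm_integral_le_of_norm_le_const (μ := volume.restrict (Set.Ioc (0:ℝ) t))
    (C := 1/4) (f := fun s => _root_.sigmoid (lam * (ν + Real.sqrt s * x))
      * (1 - _root_.sigmoid (lam * (ν + Real.sqrt s * x))))
    (Filter.Eventually.of_forall (fun s => by
      rw [Real.norm_eq_abs, abs_of_nonneg (sig_deriv_nonneg _)]
      exact sig_deriv_le _))
  calc ‖_‖ ≤ 1/4 * (volume.restrict (Set.Ioc (0:ℝ) t) Set.univ).toReal := h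
    _ = 1/4 * t := by
        rw [Measure.restrict_apply_univ, Real.volume_Ioc]
        rw [ENNReal.toReal_ofReal (by linarith)]
        ring_nf

lemma SF_aesm (lam : ℝ) (hlam : 0 < lam) (t : ℝ) (ht0 : 0 < t) (ν : ℝ) :
    AEStronglyMeasurable (fun x => SF lam t ν x) (gaussianReal 0 1) := by
  apply ((measurable_SK lam t ν).aestronglyMeasurable).congr
  filter_upwards [gauss_ae_ne_zero] with x hx
  exact (SF_eq_SK lam hlam t ht0 ν x hx).symm

lemma hasDerivAt_main (lam : ℝ) (hlam : 0 < lam) (t : ℝ) (ht0 : 0 < t) (ν₀ : ℝ) :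
    HasDerivAt (fun ν => ∫ x, SF lam t ν x ∂(gaussianReal 0 1))
      (2 / lam * ∫ x, SM lam t ν₀ x ∂(gaussianReal 0 1)) ν₀ := by
  have key := hasDerivAt_integral_of_dominated_loc_of_deriv_le (μ := gaussianReal 0 1)
    (F := fun ν x => SF lam t ν x) (F' := fun ν x => 2 / lam * SM lam t ν x)
    (x₀ := ν₀) (s := Metric.ball ν₀ 1) (bound := fun _ => lam * t) (Metric.ball_mem_nhds ν₀ one_pos)
    (Filter.Eventually.of_forall (fun ν => SF_aesm lam hlam t ht0 ν))
    ?_ ?_ ?_ ?_ ?_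
  · rw [← integral_const_mul]
    exact key.2
  · -- Integrable (SF ν₀)
    apply Integrable.mono' (g := fun _ => 1/4 * t) (integrable_const _)
      (SF_aesm lam hlam t ht0 ν₀)
    filter_upwards with x
    exact SF_le lam t ht0 ν₀ x
  · exact ((measurable_SM lam t ν₀).const_mul _).aestronglyMeasurable
  · -- bound
    filter_upwards with x ν _
    rw [Real.norm_eq_abs, abs_mul, abs_of_nonneg (by positivity : (0:ℝ) ≤ 2 / lam)]
    calc 2 / lam * |SM lam t ν x| ≤ 2 / lam * (lam^2 * t / 2) :=
          mul_le_mul_of_nonneg_left (SM_bound_all lam hlam.le t ht0.le ν x) (by positivity)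
      _ = lam * t := by field_simp
  · exact integrable_const _
  · -- differentiability
    filter_upwards [gauss_ae_ne_zero] with x hx ν _
    apply (hasDerivAt_SK lam hlam t ν x hx).congr_of_eventuallyEq
    filter_upwards with ν'
    exact SF_eq_SK lam hlam t ht0 ν' x hx


theorem smoothed_sigmoid_deriv_bound (lam : ℝ) (hlam : 0 < lam)
    (t : ℝ) (ht0 : 0 < t) (ht1 : t ≤ 1) :
    Differentiable ℝ (fun ν : ℝ => ∫ s in Set.Ioc (0 : ℝ) t,
        ∫ x, _root_.sigmoid (lam * (ν + Real.sqrt s * x))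
          * (1 - _root_.sigmoid (lam * (ν + Real.sqrt s * x))) ∂(gaussianReal 0 1)) ∧
    ∀ ν : ℝ, |deriv (fun ν : ℝ => ∫ s in Set.Ioc (0 : ℝ) t,
        ∫ x, _root_.sigmoid (lam * (ν + Real.sqrt s * x))
          * (1 - _root_.sigmoid (lam * (ν + Real.sqrt s * x))) ∂(gaussianReal 0 1)) ν|
      ≤ 2 / lam := by
  have hfun : (fun ν : ℝ => ∫ s in Set.Ioc (0 : ℝ) t,
      ∫ x, _root_.sigmoid (lam * (ν + Real.sqrt s * x))
        * (1 - _root_.sigmoid (lam * (ν + Real.sqrt s * x))) ∂(gaussianReal 0 1))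
      = fun ν => ∫ x, SF lam t ν x ∂(gaussianReal 0 1) :=
    funext (fun ν => swap_integrals lam hlam t ht0 ν)
  have hD : ∀ ν : ℝ, HasDerivAt (fun ν : ℝ => ∫ s in Set.Ioc (0 : ℝ) t,
      ∫ x, _root_.sigmoid (lam * (ν + Real.sqrt s * x))
        * (1 - _root_.sigmoid (lam * (ν + Real.sqrt s * x))) ∂(gaussianReal 0 1))
      (2 / lam * ∫ x, SM lam t ν x ∂(gaussianReal 0 1)) ν := by
    intro ν
    rw [hfun]
    exact hasDerivAt_main lam hlam t ht0 ν
  constructor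
  · exact fun ν => (hD ν).differentiableAt
  · intro ν
    rw [(hD ν).deriv]
    rw [abs_mul, abs_of_nonneg (by positivity : (0:ℝ) ≤ 2 / lam)]
    calc 2 / lam * |∫ x, SM lam t ν x ∂(gaussianReal 0 1)| ≤ 2 / lam * 1 :=
          mul_le_mul_of_nonneg_left (SM_integral_bound lam hlam t ht0 ν) (by positivity)
      _ = 2 / lam := mul_one _
end

section
/- Rademacher comparison/contraction with an offset: let {ε_i}_{i=1}^n be i.i.d. Rademacher random variables, B ⊆ ℝ^p a set, b : B → ℝ a function, a_i : B → ℝ functions, and φ_i : ℝ → ℝ L_i-Lipschitz functions. Then E[sup_{θ∈B}(b(θ) + Σ_{i=1}^n ε_i φ_i(a_i(θ)))] ≤ E[sup_{θ∈B}(b(θ) + Σ_{i=1}^n ε_i L_i a_i(θ))]. -/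
open MeasureTheory ProbabilityTheory Real

private def radr (s : Bool) : ℝ := if s then 1 else -1

private lemma radr_mul_self (s : Bool) : radr s * radr s = 1 := by cases s <;> simp [radr]

private lemma abs_radr (s : Bool) : |radr s| = 1 := by cases s <;> simp [radr]

private lemma radr_not (s : Bool) : radr (!s) = - radr s := by cases s <;> simp [radr]

private lemma radr_inj {s s' : Bool} (h : radr s = radr s') : s = s' := by
  cases s <;> cases s' <;> simp [radr] at h ⊢ <;> norm_num at h

private def Hfun {ι : Type*} {n : ℕ} (b : ι → ℝ) (a : Fin n → ι → ℝ) (L : Fin n → NNReal)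
    (φ : Fin n → ℝ → ℝ) (t : Finset (Fin n)) (σ : Fin n → Bool) (θ : ι) : ℝ :=
  b θ + ∑ i, radr (σ i) * (if i ∈ t then (L i : ℝ) * a i θ else φ i (a i θ))

private lemma rad_pair {ι : Type*} [Nonempty ι] (u v : ι → ℝ) (L : ℝ) (ψ : ℝ → ℝ)
    (hψ : ∀ x y, |ψ x - ψ y| ≤ L * |x - y|)
    (h1 : BddAbove (Set.range fun θ => u θ + L * v θ))
    (h2 : BddAbove (Set.range fun θ => u θ - L * v θ)) :
    (⨆ θ, (u θ + ψ (v θ))) + (⨆ θ, (u θ - ψ (v θ)))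
      ≤ (⨆ θ, (u θ + L * v θ)) + (⨆ θ, (u θ - L * v θ)) := by
  set S1 := ⨆ θ, (u θ + L * v θ) with hS1
  set S2 := ⨆ θ, (u θ - L * v θ) with hS2
  have key : ∀ θ θ', (u θ + ψ (v θ)) + (u θ' - ψ (v θ')) ≤ S1 + S2 := by
    intro θ θ'
    have hb : ψ (v θ) - ψ (v θ') ≤ L * |v θ - v θ'| :=
      (le_abs_self _).trans (hψ (v θ) (v θ'))
    rcases le_total (v θ') (v θ) with h | h
    · have h1' : u θ + L * v θ ≤ S1 := le_ciSup h1 θ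
      have h2' : u θ' - L * v θ' ≤ S2 := le_ciSup h2 θ'
      have habs : |v θ - v θ'| = v θ - v θ' := abs_of_nonneg (by linarith)
      rw [habs] at hb
      nlinarith [hb]
    · have h1' : u θ' + L * v θ' ≤ S1 := le_ciSup h1 θ'
      have h2' : u θ - L * v θ ≤ S2 := le_ciSup h2 θ
      have habs : |v θ - v θ'| = -(v θ - v θ') := abs_of_nonpos (by linarith)
      rw [habs] at hb
      nlinarith [hb]
  have step1 : (⨆ θ, (u θ + ψ (v θ))) ≤ S1 + S2 - ⨆ θ', (u θ' - ψ (v θ')) := by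
    apply ciSup_le; intro θ
    have : (⨆ θ', (u θ' - ψ (v θ'))) ≤ S1 + S2 - (u θ + ψ (v θ)) :=
      ciSup_le fun θ' => by linarith [key θ θ']
    linarith
  linarith

private lemma rad_step {ι : Type*} [Nonempty ι] {n : ℕ} (b : ι → ℝ) (a : Fin n → ι → ℝ)
    (L : Fin n → NNReal) (φ : Fin n → ℝ → ℝ) (hφ : ∀ i, LipschitzWith (L i) (φ i))
    (t : Finset (Fin n)) (j : Fin n) (hj : j ∉ t)
    (hbdd : ∀ σ, BddAbove (Set.range (Hfun b a L φ (insert j t) σ))) :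
    ∑ σ : Fin n → Bool, (⨆ θ, Hfun b a L φ t σ θ)
      ≤ ∑ σ : Fin n → Bool, ⨆ θ, Hfun b a L φ (insert j t) σ θ := by
  classical
  set flip : (Fin n → Bool) → (Fin n → Bool) := fun σ => Function.update σ j (!σ j) with hflipdef
  have hflip : Function.Involutive flip := by
    intro σ; funext i
    by_cases h : i = j
    · subst h; simp [flip, Function.update_self]
    · simp [flip, Function.update_of_ne h]
  have key : ∀ σ, (⨆ θ, Hfun b a L φ t σ θ) + (⨆ θ, Hfun b a L φ t (flip σ) θ)
      ≤ (⨆ θ, Hfun b a L φ (insert j t) σ θ) + (⨆ θ, Hfun b a L φ (insert j t) (flip σ) θ) := by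
    intro σ
    set s := radr (σ j) with hs
    have hs2 : s * s = 1 := radr_mul_self _
    have habs_s : |s| = 1 := abs_radr _
    set u : ι → ℝ := fun θ => b θ +
      ∑ i ∈ Finset.univ.erase j, radr (σ i) * (if i ∈ t then (L i : ℝ) * a i θ else φ i (a i θ))
      with hu
    set v : ι → ℝ := fun θ => s * a j θ with hv
    set ψ : ℝ → ℝ := fun x => s * φ j (s * x) with hψdef
    have hψ : ∀ x y, |ψ x - ψ y| ≤ (L j : ℝ) * |x - y| := by
      intro x y
      have hl := (hφ j).dist_le_mul (s * x) (s * y)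
      rw [Real.dist_eq, Real.dist_eq] at hl
      have e1 : |ψ x - ψ y| = |φ j (s * x) - φ j (s * y)| := by
        rw [hψdef]
        have : s * φ j (s * x) - s * φ j (s * y) = s * (φ j (s * x) - φ j (s * y)) := by ring
        rw [this, abs_mul, habs_s, one_mul]
      have e2 : |s * x - s * y| = |x - y| := by
        have : s * x - s * y = s * (x - y) := by ring
        rw [this, abs_mul, habs_s, one_mul]
      rw [e1, ← e2]; exact hl
    have hflipσ : ∀ i, i ≠ j → (flip σ) i = σ i := fun i hi => Function.update_of_ne hi _ _
    have hflipj : radr ((flip σ) j) = -s := by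
      simp only [flip, Function.update_self]; exact radr_not _
    have hsum_same : ∀ θ, ∑ i ∈ Finset.univ.erase j, radr ((flip σ) i) *
        (if i ∈ t then (L i : ℝ) * a i θ else φ i (a i θ)) =
        ∑ i ∈ Finset.univ.erase j, radr (σ i) *
        (if i ∈ t then (L i : ℝ) * a i θ else φ i (a i θ)) := by
      intro θ
      exact Finset.sum_congr rfl fun i hi => by rw [hflipσ i (Finset.ne_of_mem_erase hi)]
    have hsum_ins : ∀ (τ : Fin n → Bool) θ, ∑ i ∈ Finset.univ.erase j, radr (τ i) *
        (if i ∈ insert j t then (L i : ℝ) * a i θ else φ i (a i θ)) =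
        ∑ i ∈ Finset.univ.erase j, radr (τ i) *
        (if i ∈ t then (L i : ℝ) * a i θ else φ i (a i θ)) := by
      intro τ θ
      refine Finset.sum_congr rfl fun i hi => ?_
      have hij := Finset.ne_of_mem_erase hi
      simp [Finset.mem_insert, hij]
    have hE1 : ∀ θ, Hfun b a L φ t σ θ = u θ + ψ (v θ) := by
      intro θ
      rw [Hfun, ← Finset.sum_erase_add _ _ (Finset.mem_univ j), if_neg hj]
      have : ψ (v θ) = s * φ j (a j θ) := by
        rw [hψdef, hv]; simp only []
        rw [← mul_assoc, hs2, one_mul]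
      rw [this, hu]; ring
    have hE2 : ∀ θ, Hfun b a L φ t (flip σ) θ = u θ - ψ (v θ) := by
      intro θ
      rw [Hfun, ← Finset.sum_erase_add _ _ (Finset.mem_univ j), if_neg hj, hsum_same θ, hflipj]
      have : ψ (v θ) = s * φ j (a j θ) := by
        rw [hψdef, hv]; simp only []
        rw [← mul_assoc, hs2, one_mul]
      rw [this, hu]; ring
    have hE3 : ∀ θ, Hfun b a L φ (insert j t) σ θ = u θ + (L j : ℝ) * v θ := by
      intro θ
      rw [Hfun, ← Finset.sum_erase_add _ _ (Finset.mem_univ j),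
        if_pos (Finset.mem_insert_self j t), hsum_ins σ θ, hu, hv]; ring
    have hE4 : ∀ θ, Hfun b a L φ (insert j t) (flip σ) θ = u θ - (L j : ℝ) * v θ := by
      intro θ
      rw [Hfun, ← Finset.sum_erase_add _ _ (Finset.mem_univ j),
        if_pos (Finset.mem_insert_self j t), hsum_ins (flip σ) θ, hsum_same θ, hflipj, hu, hv]
      ring
    have hb1 : BddAbove (Set.range fun θ => u θ + (L j : ℝ) * v θ) := by
      have : (fun θ => u θ + (L j : ℝ) * v θ) = Hfun b a L φ (insert j t) σ :=
        funext fun θ => (hE3 θ).symm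
      rw [this]; exact hbdd σ
    have hb2 : BddAbove (Set.range fun θ => u θ - (L j : ℝ) * v θ) := by
      have : (fun θ => u θ - (L j : ℝ) * v θ) = Hfun b a L φ (insert j t) (flip σ) :=
        funext fun θ => (hE4 θ).symm
      rw [this]; exact hbdd (flip σ)
    calc (⨆ θ, Hfun b a L φ t σ θ) + (⨆ θ, Hfun b a L φ t (flip σ) θ)
        = (⨆ θ, (u θ + ψ (v θ))) + (⨆ θ, (u θ - ψ (v θ))) := by
          rw [iSup_congr hE1, iSup_congr hE2]
      _ ≤ (⨆ θ, (u θ + (L j : ℝ) * v θ)) + (⨆ θ, (u θ - (L j : ℝ) * v θ)) :=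
          rad_pair u v (L j : ℝ) ψ hψ hb1 hb2
      _ = (⨆ θ, Hfun b a L φ (insert j t) σ θ) + (⨆ θ, Hfun b a L φ (insert j t) (flip σ) θ) := by
          rw [iSup_congr hE3, iSup_congr hE4]
  have hsum_flip : ∀ f : (Fin n → Bool) → ℝ, ∑ σ, f (flip σ) = ∑ σ, f σ :=
    fun f => Fintype.sum_bijective flip hflip.bijective _ f (fun _ => rfl)
  have h2 : (∑ σ : Fin n → Bool, ⨆ θ, Hfun b a L φ t σ θ) +
      (∑ σ : Fin n → Bool, ⨆ θ, Hfun b a L φ t σ θ)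
      ≤ (∑ σ : Fin n → Bool, ⨆ θ, Hfun b a L φ (insert j t) σ θ) +
      (∑ σ : Fin n → Bool, ⨆ θ, Hfun b a L φ (insert j t) σ θ) := by
    calc (∑ σ : Fin n → Bool, ⨆ θ, Hfun b a L φ t σ θ) +
        (∑ σ : Fin n → Bool, ⨆ θ, Hfun b a L φ t σ θ)
        = ∑ σ : Fin n → Bool, ((⨆ θ, Hfun b a L φ t σ θ) + (⨆ θ, Hfun b a L φ t (flip σ) θ)) := by
          rw [Finset.sum_add_distrib, hsum_flip (fun σ => ⨆ θ, Hfun b a L φ t σ θ)]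
      _ ≤ ∑ σ : Fin n → Bool, ((⨆ θ, Hfun b a L φ (insert j t) σ θ) +
            (⨆ θ, Hfun b a L φ (insert j t) (flip σ) θ)) :=
          Finset.sum_le_sum fun σ _ => key σ
      _ = (∑ σ : Fin n → Bool, ⨆ θ, Hfun b a L φ (insert j t) σ θ) +
          (∑ σ : Fin n → Bool, ⨆ θ, Hfun b a L φ (insert j t) σ θ) := by
          rw [Finset.sum_add_distrib, hsum_flip (fun σ => ⨆ θ, Hfun b a L φ (insert j t) σ θ)]
  linarith

private lemma rad_bdd {ι : Type*} {n : ℕ} (b : ι → ℝ) (a : Fin n → ι → ℝ)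
    (L : Fin n → NNReal) (φ : Fin n → ℝ → ℝ) (hφ : ∀ i, LipschitzWith (L i) (φ i))
    (h2 : ∀ σ : Fin n → Bool, BddAbove (Set.range (Hfun b a L φ Finset.univ σ)))
    (t : Finset (Fin n)) (σ : Fin n → Bool) :
    BddAbove (Set.range (Hfun b a L φ t σ)) := by
  classical
  obtain ⟨M, hM⟩ := (Set.finite_univ (α := Fin n → Bool)).bddAbove_biUnion.mpr
    (fun τ _ => h2 τ)
  have hM' : ∀ (τ : Fin n → Bool) θ, Hfun b a L φ Finset.univ τ θ ≤ M :=
    fun τ θ => hM (Set.mem_biUnion (Set.mem_univ τ) ⟨θ, rfl⟩)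
  refine ⟨M + ∑ i, |φ i 0|, ?_⟩
  rintro x ⟨θ, rfl⟩
  set τ : Fin n → Bool := fun i => decide (0 ≤ a i θ) with hτdef
  have hτ : ∀ i, radr (τ i) * ((L i : ℝ) * a i θ) = (L i : ℝ) * |a i θ| := by
    intro i
    by_cases h : 0 ≤ a i θ
    · simp [hτdef, radr, h, abs_of_nonneg h]
    · have h' : a i θ < 0 := lt_of_not_ge h
      simp [hτdef, radr, h, abs_of_neg h']
  have hterm : ∀ i, radr (σ i) * (if i ∈ t then (L i : ℝ) * a i θ else φ i (a i θ))
      ≤ radr (τ i) * ((L i : ℝ) * a i θ) + |φ i 0| := by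
    intro i
    have h1 : ∀ X : ℝ, radr (σ i) * X ≤ |X| := fun X => by
      calc radr (σ i) * X ≤ |radr (σ i) * X| := le_abs_self _
        _ = |X| := by rw [abs_mul, abs_radr, one_mul]
    rw [hτ i]
    by_cases hi : i ∈ t
    · rw [if_pos hi]
      refine (h1 _).trans ?_
      rw [abs_mul, abs_of_nonneg (L i).coe_nonneg]
      have := abs_nonneg (φ i 0)
      linarith
    · rw [if_neg hi]
      refine (h1 _).trans ?_
      have hlip := (hφ i).dist_le_mul (a i θ) 0
      rw [Real.dist_eq, Real.dist_eq, sub_zero] at hlip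
      have := abs_sub_abs_le_abs_sub (φ i (a i θ)) (φ i 0)
      linarith
  have hbound : Hfun b a L φ t σ θ ≤ Hfun b a L φ Finset.univ τ θ + ∑ i, |φ i 0| := by
    rw [Hfun, Hfun]
    have : ∑ i, radr (σ i) * (if i ∈ t then (L i : ℝ) * a i θ else φ i (a i θ))
        ≤ ∑ i, (radr (τ i) * ((L i : ℝ) * a i θ) + |φ i 0|) :=
      Finset.sum_le_sum fun i _ => hterm i
    rw [Finset.sum_add_distrib] at this
    have he : ∑ i, radr (τ i) * (if i ∈ Finset.univ then (L i : ℝ) * a i θ else φ i (a i θ))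
        = ∑ i, radr (τ i) * ((L i : ℝ) * a i θ) :=
      Finset.sum_congr rfl fun i _ => by rw [if_pos (Finset.mem_univ i)]
    rw [he]
    linarith
  exact hbound.trans (by linarith [hM' τ θ])

private lemma rad_chain {ι : Type*} [Nonempty ι] {n : ℕ} (b : ι → ℝ) (a : Fin n → ι → ℝ)
    (L : Fin n → NNReal) (φ : Fin n → ℝ → ℝ) (hφ : ∀ i, LipschitzWith (L i) (φ i))
    (h2 : ∀ σ : Fin n → Bool, BddAbove (Set.range (Hfun b a L φ Finset.univ σ))) :
    ∑ σ : Fin n → Bool, (⨆ θ, Hfun b a L φ ∅ σ θ)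
      ≤ ∑ σ : Fin n → Bool, ⨆ θ, Hfun b a L φ Finset.univ σ θ := by
  classical
  suffices h : ∀ t : Finset (Fin n), ∑ σ : Fin n → Bool, (⨆ θ, Hfun b a L φ ∅ σ θ)
      ≤ ∑ σ : Fin n → Bool, ⨆ θ, Hfun b a L φ t σ θ from h Finset.univ
  intro t
  induction t using Finset.induction_on with
  | empty => exact le_refl _
  | @insert j t hj ih =>
    exact ih.trans (rad_step b a L φ hφ t j hj (fun σ => rad_bdd b a L φ hφ h2 _ σ))

theorem rademacher_contraction_with_offset {Ω : Type*} [MeasurableSpace Ω]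
    (μ : Measure Ω) [IsProbabilityMeasure μ] (n p : ℕ)
    (ε : Fin n → Ω → ℝ) (hεmeas : ∀ i, Measurable (ε i))
    (hindep : iIndepFun ε μ)
    (hlaw : ∀ i, Measure.map (ε i) μ
      = (2 : ENNReal)⁻¹ • Measure.dirac (1 : ℝ) + (2 : ENNReal)⁻¹ • Measure.dirac (-1 : ℝ))
    (B : Set (EuclideanSpace ℝ (Fin p))) (b : EuclideanSpace ℝ (Fin p) → ℝ)
    (a : Fin n → EuclideanSpace ℝ (Fin p) → ℝ)
    (L : Fin n → NNReal) (φ : Fin n → ℝ → ℝ) (hφ : ∀ i, LipschitzWith (L i) (φ i))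
    (hBdd1 : ∀ ω, BddAbove (Set.range fun θ : B => b θ.1 + ∑ i, ε i ω * φ i (a i θ.1)))
    (hBdd2 : ∀ ω, BddAbove (Set.range fun θ : B => b θ.1 + ∑ i, ε i ω * ((L i : ℝ) * a i θ.1)))
    (hInt1 : Integrable (fun ω => ⨆ θ : B, (b θ.1 + ∑ i, ε i ω * φ i (a i θ.1))) μ)
    (hInt2 : Integrable (fun ω => ⨆ θ : B, (b θ.1 + ∑ i, ε i ω * ((L i : ℝ) * a i θ.1))) μ) :
    ∫ ω, (⨆ θ : B, (b θ.1 + ∑ i, ε i ω * φ i (a i θ.1))) ∂μ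
      ≤ ∫ ω, (⨆ θ : B, (b θ.1 + ∑ i, ε i ω * ((L i : ℝ) * a i θ.1))) ∂μ := by
  classical
  rcases isEmpty_or_nonempty ↥B with hB | hB
  · simp [Real.iSup_of_isEmpty]
  -- single-coordinate law
  have hsingle : ∀ (i : Fin n) (s : Bool), μ (ε i ⁻¹' {radr s}) = 2⁻¹ := by
    intro i s
    have h0 : μ (ε i ⁻¹' {radr s}) = (μ.map (ε i)) {radr s} :=
      (Measure.map_apply (hεmeas i) (measurableSet_singleton _)).symm
    rw [h0, hlaw i]
    cases s <;>
      simp [radr, Measure.add_apply, Measure.smul_apply, smul_eq_mul,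
        Measure.dirac_apply' _ (measurableSet_singleton _), Set.indicator] <;>
      norm_num
  set A : (Fin n → Bool) → Set Ω := fun σ => ⋂ i, ε i ⁻¹' {radr (σ i)} with hAdef
  have hAmeas : ∀ σ, MeasurableSet (A σ) :=
    fun σ => MeasurableSet.iInter fun i => (hεmeas i) (measurableSet_singleton _)
  have hAμ : ∀ σ, μ (A σ) = 2⁻¹ ^ n := by
    intro σ
    have h := hindep.meas_iInter (s := fun i => ε i ⁻¹' {radr (σ i)})
      (fun i => ⟨{radr (σ i)}, measurableSet_singleton _, rfl⟩)
    rw [hAdef]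
    simp only [h, hsingle]
    rw [Finset.prod_const, Finset.card_univ, Fintype.card_fin]
  have hmem : ∀ σ ω, ω ∈ A σ → ∀ i, ε i ω = radr (σ i) := by
    intro σ ω hω i
    have := Set.mem_iInter.mp hω i
    simpa using this
  have hreal : ∀ σ : Fin n → Bool, ∃ ω, ∀ i, ε i ω = radr (σ i) := by
    intro σ
    have hne : (A σ).Nonempty := by
      apply nonempty_of_measure_ne_zero (μ := μ)
      rw [hAμ]
      exact pow_ne_zero _ (by simp)
    obtain ⟨ω, hω⟩ := hne
    exact ⟨ω, hmem σ ω hω⟩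
  set b' : B → ℝ := fun θ => b θ.1 with hb'
  set a' : Fin n → B → ℝ := fun i θ => a i θ.1 with ha'
  have hB2' : ∀ σ : Fin n → Bool,
      BddAbove (Set.range (Hfun b' a' L φ Finset.univ σ)) := by
    intro σ
    obtain ⟨ω, hω⟩ := hreal σ
    have hfe : Hfun b' a' L φ Finset.univ σ
        = fun θ : B => b θ.1 + ∑ i, ε i ω * ((L i : ℝ) * a i θ.1) := by
      funext θ
      simp [Hfun, hω, b', a']
    rw [hfe]; exact hBdd2 ω
  have hsum := rad_chain b' a' L φ hφ hB2'
  -- disjointness and covering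
  have hdisj : Pairwise (Function.onFun Disjoint A) := by
    intro σ σ' hne
    rw [Function.onFun, Set.disjoint_left]
    intro ω hω hω'
    apply hne
    funext i
    exact radr_inj ((hmem σ ω hω i).symm.trans (hmem σ' ω hω' i))
  have hU : MeasurableSet (⋃ σ, A σ) := MeasurableSet.iUnion hAmeas
  have hμU : μ (⋃ σ, A σ) = 1 := by
    rw [measure_iUnion hdisj hAmeas, tsum_fintype]
    simp only [hAμ, Finset.sum_const, Finset.card_univ]
    rw [nsmul_eq_mul]
    have hc : (Fintype.card (Fin n → Bool) : ENNReal) = 2 ^ n := by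
      simp [Fintype.card_fun]
    rw [hc, ← mul_pow, ENNReal.mul_inv_cancel (by norm_num) (by norm_num), one_pow]
  have hcompl : μ ((⋃ σ, A σ)ᶜ) = 0 := by
    rw [measure_compl hU (measure_ne_top μ _), hμU, measure_univ, tsub_self]
  have hint : ∀ (F : Ω → ℝ) (G : (Fin n → Bool) → ℝ), Integrable F μ →
      (∀ σ, ∀ ω ∈ A σ, F ω = G σ) →
      ∫ ω, F ω ∂μ = ∑ σ : Fin n → Bool, ((2 : ℝ)⁻¹) ^ n * G σ := by
    intro F G hF hFG
    calc ∫ ω, F ω ∂μ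
        = (∫ ω in ⋃ σ, A σ, F ω ∂μ) + ∫ ω in (⋃ σ, A σ)ᶜ, F ω ∂μ :=
          (integral_add_compl hU hF).symm
      _ = ∫ ω in ⋃ σ, A σ, F ω ∂μ := by
          rw [Measure.restrict_eq_zero.mpr hcompl]; simp
      _ = ∑' σ, ∫ ω in A σ, F ω ∂μ := integral_iUnion hAmeas hdisj hF.integrableOn
      _ = ∑ σ, ∫ ω in A σ, F ω ∂μ := tsum_fintype _
      _ = ∑ σ : Fin n → Bool, ((2 : ℝ)⁻¹) ^ n * G σ := by
          refine Finset.sum_congr rfl fun σ _ => ?_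
          rw [setIntegral_congr_fun (hAmeas σ) (fun ω hω => hFG σ ω hω), setIntegral_const,
            smul_eq_mul]
          congr 1
          rw [measureReal_def, hAμ σ]
          simp [ENNReal.toReal_pow]
  have hL : ∫ ω, (⨆ θ : B, (b θ.1 + ∑ i, ε i ω * φ i (a i θ.1))) ∂μ
      = ∑ σ : Fin n → Bool, ((2 : ℝ)⁻¹) ^ n * ⨆ θ, Hfun b' a' L φ ∅ σ θ := by
    refine hint _ _ hInt1 fun σ ω hω => ?_
    refine iSup_congr fun θ => ?_
    simp [Hfun, hmem σ ω hω, b', a']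
  have hR : ∫ ω, (⨆ θ : B, (b θ.1 + ∑ i, ε i ω * ((L i : ℝ) * a i θ.1))) ∂μ
      = ∑ σ : Fin n → Bool, ((2 : ℝ)⁻¹) ^ n * ⨆ θ, Hfun b' a' L φ Finset.univ σ θ := by
    refine hint _ _ hInt2 fun σ ω hω => ?_
    refine iSup_congr fun θ => ?_
    simp [Hfun, hmem σ ω hω, b', a']
  rw [hL, hR, ← Finset.mul_sum, ← Finset.mul_sum]
  exact mul_le_mul_of_nonneg_left hsum (by positivity)
end
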